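/- arXiv:1307.5027 — 9 statements merged into one kernel-verified Lean document; each statement's English description precedes it below -/
import Mathlib

section
/- For every n ≥ 2, the tournament W_{2n+1} is indecomposable. -/
/-- `A` is the arc relation of a tournament on the whole type. -/
def IsTournament {V : Type*} (A : V → V → Prop) : Prop :=
  (∀ x, ¬ A x x) ∧ ∀ x y : V, x ≠ y → (A x y ↔ ¬ A y x)

/-- `I` is an interval of the subtournament induced on `X`. -/
def IsIntervalOn {V : Type*} (A : V → V → Prop) (X I : Set V) : Prop :=
  I ⊆ X ∧ ∀ x ∈ X \ I, (∀ i ∈ I, A x i) ∨ (∀ i ∈ I, A i x)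

/-- Trivial intervals of the tournament induced on `X`. -/
def IsTrivialOn {V : Type*} (X I : Set V) : Prop :=
  I = ∅ ∨ (∃ v, I = {v}) ∨ I = X

/-- The subtournament induced on `X` is indecomposable. -/
def IndecomposableOn {V : Type*} (A : V → V → Prop) (X : Set V) : Prop :=
  ∀ I : Set V, IsIntervalOn A X I → IsTrivialOn X I

/-- The subtournament of `A` on `X` is isomorphic to the subtournament of `B` on `Y`. -/
def IsoOn {V W : Type*} (A : V → V → Prop) (B : W → W → Prop) (X : Set V) (Y : Set W) : Prop :=
  ∃ f : X → Y, Function.Bijective f ∧ ∀ a b : X, A a b ↔ B (f a) (f b)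

/-- The tournament `W_{2n+1}` on the vertex set `Set.Iic (2*n) ⊆ ℕ`: on `{0,...,2n-1}` it is
the usual total order, and the vertex `2n` beats exactly the even vertices. -/
def Warc (n : ℕ) (i j : ℕ) : Prop :=
  (i < 2*n ∧ j < 2*n ∧ i < j) ∨ (i = 2*n ∧ j < 2*n ∧ Even j) ∨ (j = 2*n ∧ i < 2*n ∧ Odd i)

lemma warc_iff (n i j : ℕ) : Warc n i j ↔
    ((i < 2*n ∧ j < 2*n ∧ i < j) ∨ (i = 2*n ∧ j < 2*n ∧ j % 2 = 0) ∨
      (j = 2*n ∧ i < 2*n ∧ i % 2 = 1)) := by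
  unfold Warc
  rw [Nat.even_iff, Nat.odd_iff]

/-- For every `n ≥ 2`, the tournament `W_{2n+1}` is indecomposable. -/
theorem W_indecomposable (n : ℕ) (hn : 2 ≤ n) :
    IndecomposableOn (Warc n) (Set.Iic (2*n)) := by
  rintro I ⟨hIX, hint⟩
  by_cases h0 : I = ∅
  · exact Or.inl h0
  by_cases h1 : ∃ v, I = {v}
  · exact Or.inr (Or.inl h1)
  right; right
  obtain ⟨a', ha'⟩ := Set.nonempty_iff_ne_empty.mpr h0
  obtain ⟨b', hb', hab'⟩ : ∃ b ∈ I, b ≠ a' := by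
    by_contra h
    push_neg at h
    exact h1 ⟨a', Set.eq_singleton_iff_unique_mem.mpr ⟨ha', h⟩⟩
  obtain ⟨a, b, haI, hbI, hlt⟩ : ∃ a b, a ∈ I ∧ b ∈ I ∧ a < b := by
    rcases hab'.lt_or_gt with h | h
    · exact ⟨b', a', hb', ha', h⟩
    · exact ⟨a', b', ha', hb', h⟩
  have hbd : ∀ x ∈ I, x ≤ 2*n := fun x hx => hIX hx
  -- Step A : 2n ∈ I
  have htop : 2*n ∈ I := by
    by_contra htop
    have ha2 : a < 2*n := lt_of_le_of_ne (hbd a haI) (fun h => htop (h ▸ haI))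
    have hb2 : b < 2*n := lt_of_le_of_ne (hbd b hbI) (fun h => htop (h ▸ hbI))
    have hsucc : a + 1 ∈ I := by
      by_cases hb'' : a + 1 = b
      · rwa [hb'']
      by_contra hs
      rcases hint (a+1) ⟨Set.mem_Iic.mpr (by omega), hs⟩ with h | h
      · have := (warc_iff n (a+1) a).mp (h _ haI); omega
      · have := (warc_iff n b (a+1)).mp (h _ hbI); omega
    have ha12 : a + 1 < 2*n := lt_of_le_of_ne (hbd _ hsucc) (fun h => htop (h ▸ hsucc))
    rcases hint (2*n) ⟨Set.mem_Iic.mpr le_rfl, htop⟩ with h | h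
    · have h1 := (warc_iff n (2*n) a).mp (h _ haI)
      have h2 := (warc_iff n (2*n) (a+1)).mp (h _ hsucc)
      omega
    · have h1 := (warc_iff n a (2*n)).mp (h _ haI)
      have h2 := (warc_iff n (a+1) (2*n)).mp (h _ hsucc)
      omega
  have ha2 : a < 2*n := lt_of_lt_of_le hlt (hbd b hbI)
  -- key dichotomy for vertices outside I
  have key : ∀ x, x < 2*n → x ∉ I → ∀ c ∈ I, c < 2*n →
      (x % 2 = 1 ∧ x < c) ∨ (x % 2 = 0 ∧ c < x) := by
    intro x hx hxI c hcI hc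
    rcases hint x ⟨Set.mem_Iic.mpr hx.le, hxI⟩ with h | h
    · have h1 := (warc_iff n x (2*n)).mp (h _ htop)
      have h2 := (warc_iff n x c).mp (h _ hcI)
      omega
    · have h1 := (warc_iff n (2*n) x).mp (h _ htop)
      have h2 := (warc_iff n c x).mp (h _ hcI)
      omega
  have h0I : 0 ∈ I := by
    by_contra h
    have := key 0 (by omega) h a haI ha2
    omega
  have hodd : ∀ x, x < 2*n → x % 2 = 1 → x ∈ I := by
    intro x hx hpar
    by_contra h
    have := key x hx h 0 h0I (by omega)
    omega
  have hlast : 2*n - 1 ∈ I := hodd _ (by omega) (by omega)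
  have heven : ∀ x, x < 2*n → x % 2 = 0 → x ∈ I := by
    intro x hx hpar
    by_contra h
    have := key x hx h (2*n - 1) hlast (by omega)
    omega
  apply Set.eq_of_subset_of_subset hIX
  intro x hx
  have hx' : x ≤ 2*n := Set.mem_Iic.mp hx
  by_cases hxe : x = 2*n
  · exact hxe ▸ htop
  rcases Nat.mod_two_eq_zero_or_one x with h | h
  · exact heven x (by omega) h
  · exact hodd x (by omega) h
end

section
/- For every n ≥ 2, the tournament T_{2n+1} defined on {0,...,2n} by: i beats j iff j - i is congruent modulo 2n+1 to one of 1, 2, ..., n, is indecomposable, and moreover every vertex x of T_{2n+1} is critical, i.e., T_{2n+1} - x is decomposable. -/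
/-- The tournament `T_{2n+1}` on `ZMod (2*n+1)`: `i` beats `j` iff `j - i ∈ {1,...,n}`. -/
def Tarc (n : ℕ) (i j : ZMod (2*n+1)) : Prop :=
  (j - i).val ∈ Finset.Icc 1 n

namespace Taux

instance (n : ℕ) : NeZero (2*n+1) := ⟨Nat.succ_ne_zero _⟩

variable {n : ℕ}

lemma valc {k : ℕ} (hk : k < 2*n+1) : ((k : ZMod (2*n+1))).val = k :=
  ZMod.val_cast_of_lt hk

lemma tarc_iff {a b : ZMod (2*n+1)} :
    Tarc n a b ↔ 1 ≤ (b - a).val ∧ (b - a).val ≤ n := by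
  simp [Tarc, Finset.mem_Icc]

lemma diff_val {p q : ℕ} (hp : p < 2*n+1) (hq : q < 2*n+1) :
    ((p : ZMod (2*n+1)) - q).val = if q ≤ p then p - q else 2*n+1 + p - q := by
  split_ifs with h
  · rw [← Nat.cast_sub h, valc (by omega)]
  · have h2 : ((2*n+1+p-q : ℕ) : ZMod (2*n+1)) = (p : ZMod (2*n+1)) - q := by
      rw [eq_sub_iff_add_eq, ← Nat.cast_add]
      have e : 2*n+1+p-q+q = 2*n+1+p := by omega
      rw [e, Nat.cast_add, ZMod.natCast_self, zero_add]
    rw [← h2, valc (by omega)]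

lemma repr (a b : ZMod (2*n+1)) : b = a + (((b - a).val : ℕ) : ZMod (2*n+1)) := by
  rw [ZMod.natCast_val, ZMod.cast_id]; ring

lemma cast_inj {p q : ℕ} (hp : p < 2*n+1) (hq : q < 2*n+1)
    (h : (p : ZMod (2*n+1)) = q) : p = q := by
  rw [← valc hp, ← valc hq, h]

lemma pt_inj {x : ZMod (2*n+1)} {p q : ℕ} (hp : p < 2*n+1) (hq : q < 2*n+1)
    (h : x + (p : ZMod (2*n+1)) = x + q) : p = q :=
  cast_inj hp hq (by exact add_left_cancel h)

lemma tarc_total {a b : ZMod (2*n+1)} (h : a ≠ b) : Tarc n a b ∨ Tarc n b a := by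
  have hne : b - a ≠ 0 := sub_ne_zero.mpr (Ne.symm h)
  have hv1 : 1 ≤ (b - a).val := by
    rcases Nat.eq_zero_or_pos (b - a).val with h0 | h0
    · exact absurd ((ZMod.val_eq_zero _).mp h0) hne
    · omega
  have hv2 : (b - a).val < 2*n+1 := ZMod.val_lt _
  by_cases hle : (b - a).val ≤ n
  · exact Or.inl (tarc_iff.mpr ⟨hv1, hle⟩)
  · right
    rw [tarc_iff]
    have e : a - b = -(b - a) := by ring
    rw [e, ZMod.neg_val, if_neg hne]
    omega

lemma lemA {I : Set (ZMod (2*n+1))}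
    (hI : IsIntervalOn (Tarc n) Set.univ I) {a b : ZMod (2*n+1)}
    (ha : a ∈ I) (hb : b ∈ I) (hab : Tarc n a b) :
    a + ((n+1 : ℕ) : ZMod (2*n+1)) ∈ I := by
  obtain ⟨hd1, hd2⟩ := tarc_iff.mp hab
  have hdlt : (b - a).val < 2*n+1 := ZMod.val_lt _
  by_contra hc
  have hmem : a + ((n+1 : ℕ) : ZMod (2*n+1)) ∈ Set.univ \ I := ⟨trivial, hc⟩
  rcases hI.2 _ hmem with h | h
  · have hthis := tarc_iff.mp (h b hb)
    have e : b - (a + ((n+1 : ℕ) : ZMod (2*n+1)))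
        = (((b - a).val : ℕ) : ZMod (2*n+1)) - ((n+1 : ℕ) : ZMod (2*n+1)) := by
      rw [ZMod.natCast_val, ZMod.cast_id]; ring
    rw [e, diff_val (n := n) (by omega) (by omega), if_neg (by omega)] at hthis
    omega
  · have hthis := tarc_iff.mp (h a ha)
    have e : (a + ((n+1 : ℕ) : ZMod (2*n+1))) - a
        = ((n+1 : ℕ) : ZMod (2*n+1)) - ((0 : ℕ) : ZMod (2*n+1)) := by
      push_cast; ring
    rw [e, diff_val (n := n) (by omega) (by omega), if_pos (by omega)] at hthis
    omega

lemma lemB (hn : 1 ≤ n) {I : Set (ZMod (2*n+1))}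
    (hI : IsIntervalOn (Tarc n) Set.univ I) {x : ZMod (2*n+1)}
    (hx : x ∈ I) (hy : x + ((n+1 : ℕ) : ZMod (2*n+1)) ∈ I) :
    x + ((n+1 : ℕ) : ZMod (2*n+1)) + ((n+1 : ℕ) : ZMod (2*n+1)) ∈ I := by
  have ht : Tarc n (x + ((n+1 : ℕ) : ZMod (2*n+1))) x := by
    rw [tarc_iff]
    have e : x - (x + ((n+1 : ℕ) : ZMod (2*n+1)))
        = ((0 : ℕ) : ZMod (2*n+1)) - ((n+1 : ℕ) : ZMod (2*n+1)) := by
      push_cast; ring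
    rw [e, diff_val (n := n) (p := 0) (q := n+1) (by omega) (by omega), if_neg (by omega)]
    omega
  exact lemA hI hy hx ht

lemma gen (hn : 1 ≤ n) {I : Set (ZMod (2*n+1))}
    (hI : IsIntervalOn (Tarc n) Set.univ I) {a b : ZMod (2*n+1)}
    (ha : a ∈ I) (hb : b ∈ I) (hab : Tarc n a b) :
    ∀ k : ℕ, a + ((n+1 : ℕ) : ZMod (2*n+1)) * ((k : ℕ) : ZMod (2*n+1)) ∈ I := by
  have key : ∀ k : ℕ, a + ((n+1 : ℕ) : ZMod (2*n+1)) * ((k : ℕ) : ZMod (2*n+1)) ∈ I ∧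
      a + ((n+1 : ℕ) : ZMod (2*n+1)) * ((k+1 : ℕ) : ZMod (2*n+1)) ∈ I := by
    intro k
    induction k with
    | zero =>
      constructor
      · simpa using ha
      · have h1 := lemA hI ha hb hab
        have e : a + ((n+1 : ℕ) : ZMod (2*n+1))
            = a + ((n+1 : ℕ) : ZMod (2*n+1)) * ((0+1 : ℕ) : ZMod (2*n+1)) := by
          push_cast; ring
        rwa [e] at h1
    | succ k ih =>
      refine ⟨ih.2, ?_⟩
      have hy : a + ((n+1 : ℕ) : ZMod (2*n+1)) * ((k : ℕ) : ZMod (2*n+1))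
          + ((n+1 : ℕ) : ZMod (2*n+1)) ∈ I := by
        have h2 := ih.2
        have e : a + ((n+1 : ℕ) : ZMod (2*n+1)) * ((k+1 : ℕ) : ZMod (2*n+1))
            = a + ((n+1 : ℕ) : ZMod (2*n+1)) * ((k : ℕ) : ZMod (2*n+1))
              + ((n+1 : ℕ) : ZMod (2*n+1)) := by
          push_cast; ring
        rwa [e] at h2
      have h1 := lemB hn hI ih.1 hy
      have e2 : a + ((n+1 : ℕ) : ZMod (2*n+1)) * ((k : ℕ) : ZMod (2*n+1))
          + ((n+1 : ℕ) : ZMod (2*n+1)) + ((n+1 : ℕ) : ZMod (2*n+1))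
          = a + ((n+1 : ℕ) : ZMod (2*n+1)) * ((k+1+1 : ℕ) : ZMod (2*n+1)) := by
        push_cast; ring
      rwa [e2] at h1
  exact fun k => (key k).1

lemma cover (a z : ZMod (2*n+1)) :
    ∃ k : ℕ, a + ((n+1 : ℕ) : ZMod (2*n+1)) * ((k : ℕ) : ZMod (2*n+1)) = z := by
  refine ⟨2 * (z - a).val, ?_⟩
  have h2 : ((n+1 : ℕ) : ZMod (2*n+1)) * 2 = 1 := by
    have e : ((2*n+2 : ℕ) : ZMod (2*n+1)) = 1 := by
      have : (2*n+2 : ℕ) = (2*n+1) + 1 := by omega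
      rw [this, Nat.cast_add, ZMod.natCast_self, zero_add, Nat.cast_one]
    calc ((n+1 : ℕ) : ZMod (2*n+1)) * 2 = ((2*n+2 : ℕ) : ZMod (2*n+1)) := by push_cast; ring
    _ = 1 := e
  have hv : (((z - a).val : ℕ) : ZMod (2*n+1)) = z - a := by
    rw [ZMod.natCast_val, ZMod.cast_id]
  calc a + ((n+1 : ℕ) : ZMod (2*n+1)) * ((2 * (z - a).val : ℕ) : ZMod (2*n+1))
      = a + (((n+1 : ℕ) : ZMod (2*n+1)) * 2) * (((z - a).val : ℕ) : ZMod (2*n+1)) := by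
        push_cast; ring
    _ = z := by rw [h2, hv]; ring

lemma part1 (hn : 2 ≤ n) : IndecomposableOn (Tarc n) (Set.univ : Set (ZMod (2*n+1))) := by
  intro I hI
  by_cases h0 : I = ∅
  · exact Or.inl h0
  rw [Set.eq_empty_iff_forall_notMem] at h0
  push_neg at h0
  obtain ⟨a, ha⟩ := h0
  by_cases h1 : ∀ b ∈ I, b = a
  · exact Or.inr (Or.inl ⟨a, Set.eq_singleton_iff_unique_mem.mpr ⟨ha, h1⟩⟩)
  push_neg at h1
  obtain ⟨b, hb, hba⟩ := h1
  refine Or.inr (Or.inr ?_)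
  have main : ∀ u v : ZMod (2*n+1), u ∈ I → v ∈ I → Tarc n u v → I = Set.univ := by
    intro u v hu hv huv
    ext z
    simp only [Set.mem_univ, iff_true]
    obtain ⟨k, hk⟩ := cover u z
    rw [← hk]
    exact gen (by omega) hI hu hv huv k
  rcases tarc_total (Ne.symm hba) with h | h
  · exact main a b ha hb h
  · exact main b a hb ha h

lemma part2 (hn : 2 ≤ n) (x : ZMod (2*n+1)) :
    ¬ IndecomposableOn (Tarc n) ({x}ᶜ : Set (ZMod (2*n+1))) := by
  intro h
  have pt_ne : ∀ p q : ℕ, p < 2*n+1 → q < 2*n+1 → p ≠ q →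
      x + (p : ZMod (2*n+1)) ≠ x + q := fun p q hp hq hpq he => hpq (pt_inj hp hq he)
  have px0 : ∀ p : ℕ, p < 2*n+1 → p ≠ 0 → x + (p : ZMod (2*n+1)) ≠ x := by
    intro p hp hp0 he
    exact pt_ne p 0 hp (by omega) hp0 (by simpa using he)
  set c1 : ZMod (2*n+1) := x + ((n : ℕ) : ZMod (2*n+1)) with hc1
  set c2 : ZMod (2*n+1) := x + ((n+1 : ℕ) : ZMod (2*n+1)) with hc2
  have hInt : IsIntervalOn (Tarc n) ({x}ᶜ) ({c1, c2} : Set (ZMod (2*n+1))) := by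
    constructor
    · intro i hi
      simp only [Set.mem_insert_iff, Set.mem_singleton_iff] at hi
      rcases hi with rfl | rfl
      · exact px0 n (by omega) (by omega)
      · exact px0 (n+1) (by omega) (by omega)
    · intro c hc
      obtain ⟨hcx, hci⟩ := hc
      simp only [Set.mem_compl_iff, Set.mem_singleton_iff] at hcx
      simp only [Set.mem_insert_iff, Set.mem_singleton_iff, not_or] at hci
      obtain ⟨hc1ne, hc2ne⟩ := hci
      set v := (c - x).val with hv
      have hrep : c = x + ((v : ℕ) : ZMod (2*n+1)) := repr x c
      have hvlt : v < 2*n+1 := ZMod.val_lt _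
      have hv0 : v ≠ 0 := by
        intro h0
        apply hcx
        rw [hrep, h0]; simp
      have hvn : v ≠ n := by
        intro h0; exact hc1ne (by rw [hrep, h0])
      have hvn1 : v ≠ n+1 := by
        intro h0; exact hc2ne (by rw [hrep, h0])
      have key : ∀ p : ℕ, p < 2*n+1 →
          ((x + (p : ZMod (2*n+1))) - c).val = if v ≤ p then p - v else 2*n+1 + p - v := by
        intro p hp
        have e : (x + (p : ZMod (2*n+1))) - c
            = (p : ZMod (2*n+1)) - (v : ZMod (2*n+1)) := by
          rw [hrep]; ring
        rw [e, diff_val hp hvlt]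
      have key2 : ∀ p : ℕ, p < 2*n+1 →
          (c - (x + (p : ZMod (2*n+1)))).val = if p ≤ v then v - p else 2*n+1 + v - p := by
        intro p hp
        have e : c - (x + (p : ZMod (2*n+1)))
            = (v : ZMod (2*n+1)) - (p : ZMod (2*n+1)) := by
          rw [hrep]; ring
        rw [e, diff_val hvlt hp]
      by_cases hle : v < n
      · left
        intro i hi
        simp only [Set.mem_insert_iff, Set.mem_singleton_iff] at hi
        rcases hi with rfl | rfl
        · rw [tarc_iff, hc1, key n (by omega), if_pos (by omega)]
          omega
        · rw [tarc_iff, hc2, key (n+1) (by omega), if_pos (by omega)]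
          omega
      · right
        have hge : n + 2 ≤ v := by omega
        intro i hi
        simp only [Set.mem_insert_iff, Set.mem_singleton_iff] at hi
        rcases hi with rfl | rfl
        · rw [tarc_iff, hc1, key2 n (by omega), if_pos (by omega)]
          omega
        · rw [tarc_iff, hc2, key2 (n+1) (by omega), if_pos (by omega)]
          omega
  have htriv := h _ hInt
  rcases htriv with h1 | ⟨w, h1⟩ | h1
  · have : c1 ∈ ({c1, c2} : Set (ZMod (2*n+1))) := by simp
    rw [h1] at this
    exact this
  · have e1 : c1 = w := by
      have : c1 ∈ ({c1, c2} : Set (ZMod (2*n+1))) := by simp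
      rwa [h1, Set.mem_singleton_iff] at this
    have e2 : c2 = w := by
      have : c2 ∈ ({c1, c2} : Set (ZMod (2*n+1))) := by simp
      rwa [h1, Set.mem_singleton_iff] at this
    have : c1 = c2 := e1.trans e2.symm
    exact pt_ne n (n+1) (by omega) (by omega) (by omega) this
  · have hx1 : x + ((1 : ℕ) : ZMod (2*n+1)) ∈ ({x}ᶜ : Set (ZMod (2*n+1))) := by
      simp only [Set.mem_compl_iff, Set.mem_singleton_iff]
      exact px0 1 (by omega) (by omega)
    rw [← h1] at hx1
    simp only [Set.mem_insert_iff, Set.mem_singleton_iff, hc1, hc2] at hx1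
    rcases hx1 with he | he
    · exact pt_ne 1 n (by omega) (by omega) (by omega) he
    · exact pt_ne 1 (n+1) (by omega) (by omega) (by omega) he

end Taux

/-- For every `n ≥ 2`, `T_{2n+1}` is indecomposable and every vertex is critical. -/
theorem T_indecomposable_all_critical (n : ℕ) (hn : 2 ≤ n) :
    IndecomposableOn (Tarc n) (Set.univ : Set (ZMod (2*n+1))) ∧
    ∀ x : ZMod (2*n+1), ¬ IndecomposableOn (Tarc n) ({x}ᶜ : Set (ZMod (2*n+1))) :=
  ⟨Taux.part1 hn, fun x => Taux.part2 hn x⟩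
end

section
/- For every n ≥ 2, every vertex of the tournament W_{2n+1} is critical; that is, for each x in {0,...,2n}, W_{2n+1} - x has a nontrivial interval. -/
lemma nontriv_pair {X : Set ℕ} {a b c : ℕ} (hab : a ≠ b) (hc : c ∈ X)
    (hca : c ≠ a) (hcb : c ≠ b) : ¬ IsTrivialOn X {a, b} := by
  rintro (h | ⟨v, h⟩ | h)
  · have := h ▸ (by simp : a ∈ ({a, b} : Set ℕ))
    exact this
  · have ha : a ∈ ({v} : Set ℕ) := h ▸ (by simp : a ∈ ({a, b} : Set ℕ))
    have hb : b ∈ ({v} : Set ℕ) := h ▸ (by simp : b ∈ ({a, b} : Set ℕ))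
    simp at ha hb; omega
  · have : c ∈ ({a, b} : Set ℕ) := h ▸ hc
    simp at this; omega

/-- For every `n ≥ 2`, every vertex of `W_{2n+1}` is critical: deleting it leaves a
decomposable tournament. -/
theorem W_all_vertices_critical (n : ℕ) (hn : 2 ≤ n) :
    ∀ x ∈ Set.Iic (2*n), ∃ I : Set ℕ,
      IsIntervalOn (Warc n) (Set.Iic (2*n) \ {x}) I ∧
      ¬ IsTrivialOn (Set.Iic (2*n) \ {x}) I := by
  intro x hx
  simp only [Set.mem_Iic] at hx
  rcases eq_or_ne x (2*n) with rfl | hx2n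
  · -- remove the center: take {0, 1}
    refine ⟨{0, 1}, ⟨?_, ?_⟩, ?_⟩
    · intro i hi
      simp only [Set.mem_insert_iff, Set.mem_singleton_iff] at hi
      simp only [Set.mem_diff, Set.mem_Iic, Set.mem_singleton_iff]
      omega
    · intro y hy
      simp only [Set.mem_diff, Set.mem_Iic, Set.mem_singleton_iff, Set.mem_insert_iff,
        not_or] at hy
      right
      intro i hi
      simp only [Set.mem_insert_iff, Set.mem_singleton_iff] at hi
      left; omega
    · have hc : (2:ℕ) ∈ Set.Iic (2*n) \ {2*n} := by
        simp only [Set.mem_diff, Set.mem_Iic, Set.mem_singleton_iff]; omega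
      exact nontriv_pair (by omega) hc (by omega) (by omega)
  rcases eq_or_ne x 0 with rfl | hx0
  · -- remove 0: take X \ {1}
    refine ⟨(Set.Iic (2*n) \ {0}) \ {1}, ⟨Set.diff_subset, ?_⟩, ?_⟩
    · intro y hy
      simp only [Set.mem_diff, Set.mem_Iic, Set.mem_singleton_iff, not_and, not_not] at hy
      have hy1 : y = 1 := by tauto
      subst hy1
      left
      intro i hi
      simp only [Set.mem_diff, Set.mem_Iic, Set.mem_singleton_iff] at hi
      rcases eq_or_ne i (2*n) with rfl | hi2
      · right; right; exact ⟨rfl, by omega, ⟨0, by omega⟩⟩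
      · left; omega
    · rintro (h | ⟨v, h⟩ | h)
      · have : (2:ℕ) ∈ (Set.Iic (2*n) \ {0}) \ {1} := by
          simp only [Set.mem_diff, Set.mem_Iic, Set.mem_singleton_iff]; omega
        rw [h] at this; exact this
      · have h2 : (2:ℕ) ∈ (Set.Iic (2*n) \ {0}) \ {1} := by
          simp only [Set.mem_diff, Set.mem_Iic, Set.mem_singleton_iff]; omega
        have h3 : (3:ℕ) ∈ (Set.Iic (2*n) \ {0}) \ {1} := by
          simp only [Set.mem_diff, Set.mem_Iic, Set.mem_singleton_iff]; omega
        rw [h] at h2 h3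
        simp only [Set.mem_singleton_iff] at h2 h3; omega
      · have h1 : (1:ℕ) ∈ Set.Iic (2*n) \ {0} := by
          simp only [Set.mem_diff, Set.mem_Iic, Set.mem_singleton_iff]; omega
        rw [← h] at h1
        simp at h1
  rcases eq_or_ne x (2*n - 1) with rfl | hxm
  · -- remove 2n-1: take X \ {2n-2}
    refine ⟨(Set.Iic (2*n) \ {2*n-1}) \ {2*n-2}, ⟨Set.diff_subset, ?_⟩, ?_⟩
    · intro y hy
      simp only [Set.mem_diff, Set.mem_Iic, Set.mem_singleton_iff, not_and, not_not] at hy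
      have hy1 : y = 2*n - 2 := by tauto
      subst hy1
      right
      intro i hi
      simp only [Set.mem_diff, Set.mem_Iic, Set.mem_singleton_iff] at hi
      rcases eq_or_ne i (2*n) with rfl | hi2
      · right; left; exact ⟨rfl, by omega, ⟨n - 1, by omega⟩⟩
      · left; omega
    · rintro (h | ⟨v, h⟩ | h)
      · have : (0:ℕ) ∈ (Set.Iic (2*n) \ {2*n-1}) \ {2*n-2} := by
          simp only [Set.mem_diff, Set.mem_Iic, Set.mem_singleton_iff]; omega
        rw [h] at this; exact this
      · have h2 : (0:ℕ) ∈ (Set.Iic (2*n) \ {2*n-1}) \ {2*n-2} := by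
          simp only [Set.mem_diff, Set.mem_Iic, Set.mem_singleton_iff]; omega
        have h3 : (1:ℕ) ∈ (Set.Iic (2*n) \ {2*n-1}) \ {2*n-2} := by
          simp only [Set.mem_diff, Set.mem_Iic, Set.mem_singleton_iff]; omega
        rw [h] at h2 h3
        simp only [Set.mem_singleton_iff] at h2 h3; omega
      · have h1 : (2*n-2:ℕ) ∈ Set.Iic (2*n) \ {2*n-1} := by
          simp only [Set.mem_diff, Set.mem_Iic, Set.mem_singleton_iff]; omega
        rw [← h] at h1
        simp at h1
  · -- 1 ≤ x ≤ 2n-2: take {x-1, x+1}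
    refine ⟨{x - 1, x + 1}, ⟨?_, ?_⟩, ?_⟩
    · intro i hi
      simp only [Set.mem_insert_iff, Set.mem_singleton_iff] at hi
      simp only [Set.mem_diff, Set.mem_Iic, Set.mem_singleton_iff]
      omega
    · intro y hy
      simp only [Set.mem_diff, Set.mem_Iic, Set.mem_singleton_iff, Set.mem_insert_iff,
        not_or] at hy
      obtain ⟨⟨hyle, hyne⟩, hy1, hy2⟩ := hy
      rcases eq_or_ne y (2*n) with rfl | hylt
      · rcases Nat.even_or_odd x with hpar | hpar
        · -- x even, x±1 odd: both beat 2n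
          right
          intro i hi
          simp only [Set.mem_insert_iff, Set.mem_singleton_iff] at hi
          right; right
          refine ⟨rfl, by omega, ?_⟩
          rw [Nat.odd_iff]
          rw [Nat.even_iff] at hpar
          omega
        · -- x odd, x±1 even: 2n beats both
          left
          intro i hi
          simp only [Set.mem_insert_iff, Set.mem_singleton_iff] at hi
          right; left
          refine ⟨rfl, by omega, ?_⟩
          rw [Nat.even_iff]
          rw [Nat.odd_iff] at hpar
          omega
      · rcases lt_or_gt_of_ne (show y ≠ x by omega) with hlt | hgt
        · -- y < x - 1
          left
          intro i hi
          simp only [Set.mem_insert_iff, Set.mem_singleton_iff] at hi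
          left; omega
        · -- y > x + 1
          right
          intro i hi
          simp only [Set.mem_insert_iff, Set.mem_singleton_iff] at hi
          left; omega
    · have hc : 2*n ∈ Set.Iic (2*n) \ {x} := by
        simp only [Set.mem_diff, Set.mem_Iic, Set.mem_singleton_iff]; omega
      exact nontriv_pair (by omega) hc (by omega) (by omega)
end

section
/- Let T = (V,A) be a tournament and X a subset of V with |X| ≥ 3 such that T[X] is indecomposable. Then the nonempty sets among ⟨X⟩, Ext(X), and X(u) for u ∈ X form a partition of V \ X. -/
/-- `⟨X⟩`: the outside vertices comparable with all of `X` at once. -/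
def bracketSet {V : Type*} (A : V → V → Prop) (X : Set V) : Set V :=
  {x | x ∉ X ∧ ((∀ u ∈ X, A x u) ∨ (∀ u ∈ X, A u x))}

/-- `X(u)`: the outside vertices `x` such that `{u, x}` is an interval of `T[X ∪ {x}]`. -/
def slotSet {V : Type*} (A : V → V → Prop) (X : Set V) (u : V) : Set V :=
  {x | x ∉ X ∧ IsIntervalOn A (X ∪ {x}) {u, x}}

/-- `Ext(X)`: the outside vertices `x` such that `T[X ∪ {x}]` is indecomposable. -/
def extSet {V : Type*} (A : V → V → Prop) (X : Set V) : Set V :=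
  {x | x ∉ X ∧ IndecomposableOn A (X ∪ {x})}

section Aux

variable {V : Type*} {A : V → V → Prop} {X : Set V}

lemma exists_third (hX3 : 3 ≤ X.ncard) (u u' : V) :
    ∃ w ∈ X, w ≠ u ∧ w ≠ u' := by
  by_contra h
  push_neg at h
  have hsub : X ⊆ ({u, u'} : Set V) := by
    intro w hw
    rcases eq_or_ne w u with rfl | hne
    · exact Set.mem_insert _ _
    · simp [h w hw hne]
  have h2 : X.ncard ≤ 2 := by
    calc X.ncard ≤ ({u, u'} : Set V).ncard :=
          Set.ncard_le_ncard hsub ((Set.finite_singleton u').insert u)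
    _ ≤ 2 := le_trans (Set.ncard_insert_le _ _) (by simp)
  omega

lemma no_dominator (hX3 : 3 ≤ X.ncard) (hXind : IndecomposableOn A X)
    {u : V} (hu : u ∈ X)
    (h : (∀ w ∈ X \ {u}, A u w) ∨ ∀ w ∈ X \ {u}, A w u) : False := by
  have hint : IsIntervalOn A X (X \ {u}) := by
    refine ⟨Set.diff_subset, ?_⟩
    intro y hy
    have hyu : y = u := by
      by_contra hne
      exact hy.2 ⟨hy.1, by simpa using hne⟩
    subst hyu
    rcases h with h | h
    · exact Or.inl h
    · exact Or.inr h
  rcases hXind _ hint with h0 | ⟨v, hv⟩ | hX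
  · obtain ⟨w, hwX, hwu, -⟩ := exists_third hX3 u u
    have : w ∈ X \ {u} := ⟨hwX, by simpa using hwu⟩
    rw [h0] at this
    exact this
  · obtain ⟨w, hwX, hwu, -⟩ := exists_third hX3 u u
    obtain ⟨w', hw'X, hw'u, hw'w⟩ := exists_third hX3 u w
    have h1 : w ∈ X \ {u} := ⟨hwX, by simpa using hwu⟩
    have h2 : w' ∈ X \ {u} := ⟨hw'X, by simpa using hw'u⟩
    rw [hv] at h1 h2
    simp only [Set.mem_singleton_iff] at h1 h2
    exact hw'w (h2.trans h1.symm)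
  · have : u ∈ X \ {u} := by rw [hX]; exact hu
    exact this.2 rfl

end Aux

/-- The nonempty sets among `⟨X⟩`, `Ext(X)` and the `X(u)` for `u ∈ X` form a partition
of `V \ X`. -/
theorem partition_outside {V : Type*} [Fintype V] (A : V → V → Prop)
    (hA : IsTournament A) (X : Set V) (hX3 : 3 ≤ X.ncard)
    (hXind : IndecomposableOn A X) :
    (bracketSet A X ∪ extSet A X ∪ ⋃ u ∈ X, slotSet A X u) = Xᶜ ∧
    Disjoint (bracketSet A X) (extSet A X) ∧
    (∀ u ∈ X, Disjoint (bracketSet A X) (slotSet A X u)) ∧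
    (∀ u ∈ X, Disjoint (extSet A X) (slotSet A X u)) ∧
    (∀ u ∈ X, ∀ u' ∈ X, u ≠ u' → Disjoint (slotSet A X u) (slotSet A X u')) := by
  obtain ⟨hirr, hcmp⟩ := hA
  refine ⟨?_, ?_, ?_, ?_, ?_⟩
  · -- union
    apply subset_antisymm
    · intro x hx
      simp only [Set.mem_union, Set.mem_iUnion] at hx
      rcases hx with (hx | hx) | ⟨u, hu, hx⟩
      · exact hx.1
      · exact hx.1
      · exact hx.1
    · intro x hx
      have hxX : x ∉ X := hx
      by_cases hind : IndecomposableOn A (X ∪ {x})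
      · exact Set.mem_union_left _ (Set.mem_union_right _ ⟨hxX, hind⟩)
      · simp only [IndecomposableOn, not_forall] at hind
        obtain ⟨I, hI, hnt⟩ := hind
        have hJ : IsIntervalOn A X (I ∩ X) := by
          refine ⟨Set.inter_subset_right, ?_⟩
          intro y hy
          have hyI : y ∉ I := fun h => hy.2 ⟨h, hy.1⟩
          rcases hI.2 y ⟨Or.inl hy.1, hyI⟩ with h | h
          · exact Or.inl fun i hi => h i hi.1
          · exact Or.inr fun i hi => h i hi.1
        rcases hXind _ hJ with hJ0 | ⟨u, hJu⟩ | hJX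
        · -- I ∩ X = ∅ : I ⊆ {x}, so I trivial, contradiction
          exfalso
          have hIx : I ⊆ {x} := by
            intro i hi
            rcases hI.1 hi with hiX | hix
            · exact absurd (hJ0 ▸ (⟨hi, hiX⟩ : i ∈ I ∩ X)) (Set.notMem_empty i)
            · exact hix
          rcases Set.subset_singleton_iff_eq.mp hIx with rfl | rfl
          · exact hnt (Or.inl rfl)
          · exact hnt (Or.inr (Or.inl ⟨x, rfl⟩))
        · -- I ∩ X = {u}
          have huI : u ∈ I ∧ u ∈ X := by
            have : u ∈ I ∩ X := hJu ▸ rfl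
            exact ⟨this.1, this.2⟩
          have hxI : x ∈ I := by
            by_contra hxI
            refine hnt (Or.inr (Or.inl ⟨u, ?_⟩))
            ext i
            constructor
            · intro hi
              rcases hI.1 hi with hiX | hix
              · exact hJu ▸ (⟨hi, hiX⟩ : i ∈ I ∩ X)
              · exact absurd (hix ▸ hi) hxI
            · intro hi
              exact (Set.mem_singleton_iff.mp hi) ▸ huI.1
          have hIeq : I = {u, x} := by
            ext i
            constructor
            · intro hi
              rcases hI.1 hi with hiX | hix
              · have : i ∈ ({u} : Set V) := hJu ▸ (⟨hi, hiX⟩ : i ∈ I ∩ X)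
                exact Or.inl this
              · exact Or.inr hix
            · intro hi
              rcases hi with rfl | rfl
              · exact huI.1
              · exact hxI
          refine Set.mem_union_right _ ?_
          simp only [Set.mem_iUnion]
          exact ⟨u, huI.2, hxX, hIeq ▸ hI⟩
        · -- I ∩ X = X
          have hXI : X ⊆ I := fun v hv => (show v ∈ I ∩ X by rw [hJX]; exact hv).1
          have hxI : x ∉ I := by
            intro hxI
            refine hnt (Or.inr (Or.inr (subset_antisymm hI.1 ?_)))
            intro i hi
            rcases hi with hiX | hix
            · exact hXI hiX
            · exact hix ▸ hxI
          have hIX : I = X := subset_antisymm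
            (fun i hi => (hI.1 hi).resolve_right (fun h => hxI (h ▸ hi))) hXI
          rcases hI.2 x ⟨Or.inr rfl, hxI⟩ with h | h
          · exact Set.mem_union_left _ (Set.mem_union_left _
              ⟨hxX, Or.inl fun v hv => h v (hIX ▸ hv)⟩)
          · exact Set.mem_union_left _ (Set.mem_union_left _
              ⟨hxX, Or.inr fun v hv => h v (hIX ▸ hv)⟩)
  · -- bracket vs ext
    rw [Set.disjoint_left]
    rintro x ⟨hxX, hb⟩ ⟨-, hind⟩
    have hint : IsIntervalOn A (X ∪ {x}) X := by
      refine ⟨Set.subset_union_left, ?_⟩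
      intro y hy
      have hyx : y = x := by
        rcases hy.1 with h | h
        · exact absurd h hy.2
        · exact h
      subst hyx
      rcases hb with h | h
      · exact Or.inl h
      · exact Or.inr h
    rcases hind _ hint with h0 | ⟨v, hv⟩ | hX
    · rw [h0] at hX3; simp at hX3
    · rw [hv] at hX3; simp at hX3
    · exact hxX (hX ▸ Set.mem_union_right X (Set.mem_singleton x))
  · -- bracket vs slot
    intro u huX
    rw [Set.disjoint_left]
    rintro x ⟨hxX, hb⟩ ⟨-, hs⟩
    have key : ∀ w ∈ X \ {u}, (A u w ∧ A x w) ∨ (A w u ∧ A w x) := by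
      intro w hw
      have hwX : w ∈ X := hw.1
      have hwu : w ≠ u := by simpa using hw.2
      have hwx : w ≠ x := fun h => hxX (h ▸ hwX)
      have hwmem : w ∈ (X ∪ {x}) \ {u, x} := ⟨Or.inl hwX, by simp [hwu, hwx]⟩
      rcases hs.2 w hwmem with h | h
      · exact Or.inr ⟨h u (Or.inl rfl), h x (Or.inr rfl)⟩
      · exact Or.inl ⟨h u (Or.inl rfl), h x (Or.inr rfl)⟩
    rcases hb with hL | hR
    · refine no_dominator hX3 hXind huX (Or.inl fun w hw => ?_)
      have hwx : w ≠ x := fun h => hxX (h ▸ hw.1)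
      rcases key w hw with h | h
      · exact h.1
      · exact absurd h.2 ((hcmp x w hwx.symm).mp (hL w hw.1))
    · refine no_dominator hX3 hXind huX (Or.inr fun w hw => ?_)
      have hwx : w ≠ x := fun h => hxX (h ▸ hw.1)
      rcases key w hw with h | h
      · exact absurd (hR w hw.1) ((hcmp x w hwx.symm).mp h.2)
      · exact h.1
  · -- ext vs slot
    intro u huX
    rw [Set.disjoint_left]
    rintro x ⟨hxX, hind⟩ ⟨-, hs⟩
    rcases hind _ hs with h0 | ⟨v, hv⟩ | hX
    · have : u ∈ ({u, x} : Set V) := Or.inl rfl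
      rw [h0] at this
      exact this
    · have hu : u ∈ ({v} : Set V) := hv ▸ (Or.inl rfl : u ∈ ({u, x} : Set V))
      have hx : x ∈ ({v} : Set V) := hv ▸ (Or.inr rfl : x ∈ ({u, x} : Set V))
      simp only [Set.mem_singleton_iff] at hu hx
      exact hxX ((hx.trans hu.symm) ▸ huX)
    · obtain ⟨w, hwX, hwu, hwx⟩ := exists_third hX3 u x
      have : w ∈ ({u, x} : Set V) := hX ▸ Or.inl hwX
      rcases this with h | h
      · exact hwu h
      · exact hwx h
  · -- slot vs slot
    intro u huX u' hu'X hne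
    rw [Set.disjoint_left]
    rintro x ⟨hxX, hs⟩ ⟨-, hs'⟩
    have hint : IsIntervalOn A X {u, u'} := by
      refine ⟨?_, ?_⟩
      · intro i hi
        rcases hi with rfl | rfl
        · exact huX
        · exact hu'X
      · intro w hw
        have hwX : w ∈ X := hw.1
        have hwu : w ≠ u := fun h => hw.2 (Or.inl h)
        have hwu' : w ≠ u' := fun h => hw.2 (Or.inr h)
        have hwx : w ≠ x := fun h => hxX (h ▸ hwX)
        have c1 := hs.2 w ⟨Or.inl hwX, by simp [hwu, hwx]⟩
        have c2 := hs'.2 w ⟨Or.inl hwX, by simp [hwu', hwx]⟩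
        rcases c1 with a | a <;> rcases c2 with b | b
        · refine Or.inl fun i hi => ?_
          rcases hi with rfl | rfl
          · exact a i (Or.inl rfl)
          · exact b i (Or.inl rfl)
        · exact absurd (a x (Or.inr rfl)) ((hcmp x w hwx.symm).mp (b x (Or.inr rfl)))
        · exact absurd (b x (Or.inr rfl)) ((hcmp x w hwx.symm).mp (a x (Or.inr rfl)))
        · refine Or.inr fun i hi => ?_
          rcases hi with rfl | rfl
          · exact a i (Or.inl rfl)
          · exact b i (Or.inl rfl)
    rcases hXind _ hint with h0 | ⟨v, hv⟩ | hX
    · have : u ∈ ({u, u'} : Set V) := Or.inl rfl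
      rw [h0] at this
      exact this
    · have hu : u ∈ ({v} : Set V) := hv ▸ (Or.inl rfl : u ∈ ({u, u'} : Set V))
      have hu' : u' ∈ ({v} : Set V) := hv ▸ (Or.inr rfl : u' ∈ ({u, u'} : Set V))
      simp only [Set.mem_singleton_iff] at hu hu'
      exact hne (hu.trans hu'.symm)
    · obtain ⟨w, hwX, hwu, hwu'⟩ := exists_third hX3 u u'
      have : w ∈ ({u, u'} : Set V) := hX ▸ hwX
      rcases this with h | h
      · exact hwu h
      · exact hwu' h
end

section
/- Let T = (V,A) be a tournament, X ⊆ V with |X| ≥ 3 and T[X] indecomposable. For u ∈ X, x ∈ X(u), and y ∈ V \ (X ∪ X(u)), if T[X ∪ {x,y}] is decomposable then {u,x} is an interval of T[X ∪ {x,y}]. -/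
/- Split a nontrivial interval `I` of `T[X ∪ {x, y}]` according to the trivial
interval `I ∩ X` of `T[X]`. Everything reduces to pairs: `{a, b}` is an interval exactly when
no outside vertex separates `a` from `b`, and since `T[X]` is indecomposable with `|X| ≥ 3`,
two distinct vertices of `X` are always separated inside `X`. Hence `x ∉ ⟨X⟩`, the sets `X(v)`
are pairwise disjoint, and in every case either `y ∈ X(u)` (excluded) or `y` does not separate
`u` from `x`, which is all that is missing for `{u, x}` to be an interval of `T[X ∪ {x, y}]`. -/

section

variable {V : Type*} {A : V → V → Prop}

lemma IsIntervalOn.inter_of_subset {X Y I : Set V} (hI : IsIntervalOn A Y I) (hXY : X ⊆ Y) :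
    IsIntervalOn A X (I ∩ X) := by
  refine ⟨Set.inter_subset_right, fun w hw => ?_⟩
  have hwI : w ∉ I := fun h => hw.2 ⟨h, hw.1⟩
  rcases hI.2 w ⟨hXY hw.1, hwI⟩ with h | h
  · exact Or.inl fun i hi => h i hi.1
  · exact Or.inr fun i hi => h i hi.1

lemma IsIntervalOn.iff_of_mem (hA : IsTournament A) {Y I : Set V} (hI : IsIntervalOn A Y I)
    {w a b : V} (hw : w ∈ Y) (hwI : w ∉ I) (ha : a ∈ I) (hb : b ∈ I) : A w a ↔ A w b := by
  have hwa : a ≠ w := fun h => hwI (h ▸ ha)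
  have hwb : b ≠ w := fun h => hwI (h ▸ hb)
  rcases hI.2 w ⟨hw, hwI⟩ with h | h
  · exact iff_of_true (h a ha) (h b hb)
  · exact iff_of_false ((hA.2 a w hwa).mp (h a ha)) ((hA.2 b w hwb).mp (h b hb))

lemma IsIntervalOn.iff_of_mem_rev (hA : IsTournament A) {Y I : Set V} (hI : IsIntervalOn A Y I)
    {w a b : V} (hw : w ∈ Y) (hwI : w ∉ I) (ha : a ∈ I) (hb : b ∈ I) : A a w ↔ A b w := by
  have hwa : w ≠ a := fun h => hwI (h ▸ ha)
  have hwb : w ≠ b := fun h => hwI (h ▸ hb)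
  rcases hI.2 w ⟨hw, hwI⟩ with h | h
  · exact iff_of_false ((hA.2 w a hwa).mp (h a ha)) ((hA.2 w b hwb).mp (h b hb))
  · exact iff_of_true (h a ha) (h b hb)

lemma exists_nontrivial_isIntervalOn_of_not_indecomposableOn {Y : Set V}
    (h : ¬ IndecomposableOn A Y) : ∃ I, IsIntervalOn A Y I ∧ I.Nontrivial ∧ I ≠ Y := by
  simp only [IndecomposableOn, IsTrivialOn, not_forall, not_or, not_exists] at h
  obtain ⟨I, hI, hI_ne, hI_single, hIY⟩ := h
  refine ⟨I, hI, ?_, hIY⟩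
  exact (Set.nonempty_iff_ne_empty.mpr hI_ne).exists_eq_singleton_or_nontrivial.resolve_left
    fun ⟨v, hv⟩ => hI_single v hv

lemma isIntervalOn_pair_iff (hA : IsTournament A) {Z : Set V} {a b : V} (ha : a ∈ Z)
    (hb : b ∈ Z) :
    IsIntervalOn A Z {a, b} ↔ ∀ w ∈ Z, w ≠ a → w ≠ b → (A w a ↔ A w b) := by
  refine ⟨fun h w hw hwa hwb => h.iff_of_mem hA hw (by simp [hwa, hwb]) (by simp) (by simp),
    fun h => ⟨Set.pair_subset ha hb, fun w hw => ?_⟩⟩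
  have hwa : w ≠ a := fun e => hw.2 (Or.inl e)
  have hwb : w ≠ b := fun e => hw.2 (Or.inr e)
  by_cases hwa' : A w a
  · exact Or.inl (by simp [hwa', (h w hw.1 hwa hwb).mp hwa'])
  · have hwb' : ¬ A w b := mt (h w hw.1 hwa hwb).mpr hwa'
    exact Or.inr (by simp [(hA.2 a w hwa.symm).mpr hwa', (hA.2 b w hwb.symm).mpr hwb'])

namespace IndecomposableOn

variable {X : Set V}

lemma not_isIntervalOn_pair (hX : IndecomposableOn A X) (h3 : 3 ≤ X.ncard) {a b : V}
    (hab : a ≠ b) : ¬ IsIntervalOn A X {a, b} := by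
  intro h
  rcases hX _ h with h | ⟨v, h⟩ | h
  · exact (Set.insert_nonempty a {b}).ne_empty h
  · have ha : a = v := h.subset (Or.inl rfl)
    have hb : b = v := h.subset (Or.inr rfl)
    exact hab (ha.trans hb.symm)
  · rw [← h, Set.ncard_pair hab] at h3
    omega

lemma not_isIntervalOn_diff_singleton (hX : IndecomposableOn A X) (h3 : 3 ≤ X.ncard) {u : V}
    (hu : u ∈ X) : ¬ IsIntervalOn A X (X \ {u}) := by
  intro h
  have hcard : (X \ {u}).ncard = X.ncard - 1 := Set.ncard_sdiff_singleton_of_mem hu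
  rcases hX _ h with h | ⟨v, h⟩ | h
  · rw [h, Set.ncard_empty] at hcard
    omega
  · rw [h, Set.ncard_singleton] at hcard
    omega
  · exact (h.symm ▸ hu : u ∈ X \ {u}).2 rfl

end IndecomposableOn

section Slot

variable {X : Set V} {u v x y : V}

lemma mem_slotSet_iff (hA : IsTournament A) (hu : u ∈ X) :
    x ∈ slotSet A X u ↔ x ∉ X ∧ ∀ w ∈ X, w ≠ u → (A w u ↔ A w x) := by
  show x ∉ X ∧ IsIntervalOn A (X ∪ {x}) {u, x} ↔ _
  rw [isIntervalOn_pair_iff hA (Or.inl hu) (Or.inr rfl)]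
  refine and_congr_right fun hxX => ⟨fun h w hw hwu => h w (Or.inl hw) hwu ?_,
    fun h w hw hwu hwx => h w (hw.resolve_right hwx) hwu⟩
  rintro rfl
  exact hxX hw

lemma notMem_bracketSet_of_mem_slotSet (hA : IsTournament A) (hX : IndecomposableOn A X)
    (h3 : 3 ≤ X.ncard) (hu : u ∈ X) (hx : x ∈ slotSet A X u) : x ∉ bracketSet A X := by
  rintro ⟨hxX, hbr⟩
  have hslot := ((mem_slotSet_iff hA hu).mp hx).2
  refine hX.not_isIntervalOn_diff_singleton h3 hu ⟨Set.sdiff_subset, fun w hw => ?_⟩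
  obtain rfl : w = u := by_contra fun h => hw.2 ⟨hw.1, h⟩
  -- `w` is on the same side of every `i ∈ X \ {w}` as `x`, and `x` is on one side of all of `X`.
  have hne : ∀ i ∈ X, i ≠ x := fun i hi e => hxX (e ▸ hi)
  rcases hbr with h | h
  · refine Or.inl fun i hi => (hA.2 w i (Ne.symm hi.2)).mpr fun hiw => ?_
    exact (hA.2 x i (hne i hi.1).symm).mp (h i hi.1) ((hslot i hi.1 hi.2).mp hiw)
  · exact Or.inr fun i hi => (hslot i hi.1 hi.2).mpr (h i hi.1)

lemma eq_of_mem_slotSet_of_mem_slotSet (hA : IsTournament A) (hX : IndecomposableOn A X)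
    (h3 : 3 ≤ X.ncard) (hu : u ∈ X) (hv : v ∈ X) (hxu : x ∈ slotSet A X u)
    (hxv : x ∈ slotSet A X v) : u = v := by
  by_contra huv
  have hu' := ((mem_slotSet_iff hA hu).mp hxu).2
  have hv' := ((mem_slotSet_iff hA hv).mp hxv).2
  exact hX.not_isIntervalOn_pair h3 huv <| (isIntervalOn_pair_iff hA hu hv).mpr
    fun w hw hwu hwv => (hu' w hw hwu).trans (hv' w hw hwv).symm

lemma mem_slotSet_of_inter_eq_singleton (hA : IsTournament A) {Y I : Set V}
    (hI : IsIntervalOn A Y I) (hXY : X ⊆ Y) (hIX : I ∩ X = {v}) {z : V} (hz : z ∈ I)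
    (hzX : z ∉ X) : z ∈ slotSet A X v := by
  have hvI : v ∈ I := (hIX.symm ▸ rfl : v ∈ I ∩ X).1
  have hvX : v ∈ X := (hIX.symm ▸ rfl : v ∈ I ∩ X).2
  refine (mem_slotSet_iff hA hvX).mpr ⟨hzX, fun w hw hwv => ?_⟩
  have hwI : w ∉ I := fun h => hwv (hIX ▸ ⟨h, hw⟩ : w ∈ ({v} : Set V))
  exact hI.iff_of_mem hA (hXY hw) hwI hvI hz

lemma isIntervalOn_union_pair_of_iff (hA : IsTournament A) (hu : u ∈ X)
    (hx : x ∈ slotSet A X u) (h : A y u ↔ A y x) : IsIntervalOn A (X ∪ {x, y}) {u, x} := by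
  have hslot := ((mem_slotSet_iff hA hu).mp hx).2
  refine (isIntervalOn_pair_iff hA (Or.inl hu) (Or.inr (Or.inl rfl))).mpr ?_
  rintro w (hw | rfl | rfl) hwu hwx
  · exact hslot w hw hwu
  · exact absurd rfl hwx
  · exact h

lemma mem_slotSet_of_inter_eq_empty (hA : IsTournament A) (hu : u ∈ X)
    (hx : x ∈ slotSet A X u) (hyX : y ∉ X) {I : Set V} (hI : IsIntervalOn A (X ∪ {x, y}) I)
    (hI_nontriv : I.Nontrivial) (hIX : I ∩ X = ∅) : y ∈ slotSet A X u := by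
  have hIxy : ∀ z ∈ I, z = x ∨ z = y := fun z hz => (hI.1 hz).resolve_left fun hzX =>
    hIX.subset ⟨hz, hzX⟩
  have hxI : x ∈ I := by_contra fun hxI => hI_nontriv.not_subset_singleton fun z hz =>
    (hIxy z hz).resolve_left fun e => hxI (e ▸ hz)
  have hyI : y ∈ I := by_contra fun hyI => hI_nontriv.not_subset_singleton fun z hz =>
    (hIxy z hz).resolve_right fun e => hyI (e ▸ hz)
  refine (mem_slotSet_iff hA hu).mpr ⟨hyX, fun w hw hwu => ?_⟩
  have hwI : w ∉ I := fun h => hIX.subset ⟨h, hw⟩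
  exact (((mem_slotSet_iff hA hu).mp hx).2 w hw hwu).trans
    (hI.iff_of_mem hA (Or.inl hw) hwI hxI hyI)

lemma slot_iff_of_inter_eq_singleton (hA : IsTournament A) (hX : IndecomposableOn A X)
    (h3 : 3 ≤ X.ncard) (hu : u ∈ X) (hx : x ∈ slotSet A X u) (hy : y ∉ X ∪ slotSet A X u)
    {I : Set V} (hI : IsIntervalOn A (X ∪ {x, y}) I) (hI_nontriv : I.Nontrivial)
    (hIX : I ∩ X = {v}) : A y u ↔ A y x := by
  have hvI : v ∈ I := (hIX.symm ▸ rfl : v ∈ I ∩ X).1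
  have hvX : v ∈ X := (hIX.symm ▸ rfl : v ∈ I ∩ X).2
  have hslot_of_mem : ∀ z ∈ I, z ∉ X → z ∈ slotSet A X v :=
    fun z => mem_slotSet_of_inter_eq_singleton hA hI Set.subset_union_left hIX
  have hyX : y ∉ X := fun h => hy (Or.inl h)
  have hyu : y ∉ slotSet A X u := fun h => hy (Or.inr h)
  by_cases hxI : x ∈ I
  · obtain rfl : u = v :=
      eq_of_mem_slotSet_of_mem_slotSet hA hX h3 hu hvX hx (hslot_of_mem x hxI hx.1)
    have hyI : y ∉ I := fun hyI => hyu (hslot_of_mem y hyI hyX)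
    exact hI.iff_of_mem hA (Or.inr (Or.inr rfl)) hyI hvI hxI
  have hyI : y ∈ I := by
    by_contra hyI
    refine hI_nontriv.not_subset_singleton (x := v) fun z hz => ?_
    rcases hI.1 hz with hzX | rfl | rfl
    · exact hIX ▸ ⟨hz, hzX⟩
    · exact absurd hz hxI
    · exact absurd hz hyI
  have huv : u ≠ v := by
    rintro rfl
    exact hyu (hslot_of_mem y hyI hyX)
  have huI : u ∉ I := fun h => huv (hIX ▸ ⟨h, hu⟩ : u ∈ ({v} : Set V))
  -- `u` and `x` lie outside the interval `{v, y}`, and `v` does not separate them.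
  calc A y u ↔ A v u := (hI.iff_of_mem_rev hA (Or.inl hu) huI hvI hyI).symm
    _ ↔ A v x := ((mem_slotSet_iff hA hu).mp hx).2 v hvX (Ne.symm huv)
    _ ↔ A y x := hI.iff_of_mem_rev hA (Or.inr (Or.inl rfl)) hxI hvI hyI

lemma slot_iff_of_subset (hA : IsTournament A) (hX : IndecomposableOn A X)
    (h3 : 3 ≤ X.ncard) (hu : u ∈ X) (hx : x ∈ slotSet A X u) {I : Set V}
    (hI : IsIntervalOn A (X ∪ {x, y}) I) (hIY : I ≠ X ∪ {x, y}) (hXI : X ⊆ I) :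
    A y u ↔ A y x := by
  have hxI : x ∈ I := by
    by_contra hxI
    refine notMem_bracketSet_of_mem_slotSet hA hX h3 hu hx ⟨hx.1, ?_⟩
    rcases hI.2 x ⟨Or.inr (Or.inl rfl), hxI⟩ with h | h
    exacts [Or.inl fun w hw => h w (hXI hw), Or.inr fun w hw => h w (hXI hw)]
  have hyI : y ∉ I := fun hyI =>
    hIY (hI.1.antisymm (Set.union_subset hXI (Set.pair_subset hxI hyI)))
  exact hI.iff_of_mem hA (Or.inr (Or.inr rfl)) hyI (hXI hu) hxI

end Slot

end

theorem slot_case_general {V : Type*} (A : V → V → Prop)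
    (hA : IsTournament A) (X : Set V) (hX3 : 3 ≤ X.ncard)
    (hXind : IndecomposableOn A X)
    (u : V) (hu : u ∈ X) (x : V) (hx : x ∈ slotSet A X u)
    (y : V) (hy : y ∉ X ∪ slotSet A X u)
    (hdec : ¬ IndecomposableOn A (X ∪ {x, y})) :
    IsIntervalOn A (X ∪ {x, y}) {u, x} := by
  obtain ⟨I, hI, hI_nontriv, hIY⟩ := exists_nontrivial_isIntervalOn_of_not_indecomposableOn hdec
  refine isIntervalOn_union_pair_of_iff hA hu hx ?_
  rcases hXind _ (hI.inter_of_subset Set.subset_union_left) with hIX | ⟨v, hIX⟩ | hIX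
  · have hyu := mem_slotSet_of_inter_eq_empty hA hu hx (fun h => hy (Or.inl h)) hI hI_nontriv hIX
    exact absurd (Or.inr hyu) hy
  · exact slot_iff_of_inter_eq_singleton hA hXind hX3 hu hx hy hI hI_nontriv hIX
  · exact slot_iff_of_subset hA hXind hX3 hu hx hI hIY (Set.inter_eq_right.mp hIX)

/-- For `u ∈ X`, `x ∈ X(u)` and `y ∉ X ∪ X(u)`, if `T[X ∪ {x,y}]` is decomposable then
`{u,x}` is an interval of `T[X ∪ {x,y}]`. -/
theorem slot_case {V : Type*} [Fintype V] (A : V → V → Prop)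
    (hA : IsTournament A) (X : Set V) (hX3 : 3 ≤ X.ncard)
    (hXind : IndecomposableOn A X)
    (u : V) (hu : u ∈ X) (x : V) (hx : x ∈ slotSet A X u)
    (y : V) (hy : y ∉ X ∪ slotSet A X u)
    (hdec : ¬ IndecomposableOn A (X ∪ {x, y})) :
    IsIntervalOn A (X ∪ {x, y}) {u, x} :=
  slot_case_general A hA X hX3 hXind u hu x hx y hy hdec
end

section
/- Let T = (V,A) be a tournament, X ⊆ V with |X| ≥ 3 and T[X] indecomposable. For distinct x, y ∈ Ext(X), if T[X ∪ {x,y}] is decomposable then {x,y} is an interval of T[X ∪ {x,y}]. -/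
lemma interval_inter {V : Type*} (A : V → V → Prop) {Y Z I : Set V}
    (hZ : Z ⊆ Y) (hI : IsIntervalOn A Y I) : IsIntervalOn A Z (I ∩ Z) := by
  refine ⟨Set.inter_subset_right, ?_⟩
  intro z hz
  have hzI : z ∈ Y \ I := ⟨hZ hz.1, fun h => hz.2 ⟨h, hz.1⟩⟩
  rcases hI.2 z hzI with h | h
  · exact Or.inl fun i hi => h i hi.1
  · exact Or.inr fun i hi => h i hi.1

lemma key_contra {V : Type*} (A : V → V → Prop) {X : Set V} (hX3 : 3 ≤ X.ncard)
    {z w : V} (hw : w ∉ X)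
    (hwind : IndecomposableOn A (X ∪ {w})) {I : Set V}
    (hIint : IsIntervalOn A (X ∪ {z, w}) I)
    (hIne : I ≠ X ∪ {z, w}) (hsub : X ∪ {z} ⊆ I) : False := by
  have hwI : w ∉ I := by
    intro hwI
    apply hIne
    apply Set.Subset.antisymm hIint.1
    intro u hu
    rcases hu with hu | hu
    · exact hsub (Or.inl hu)
    · rcases hu with rfl | rfl
      · exact hsub (Or.inr rfl)
      · exact hwI
  have hwmem : w ∈ (X ∪ {z, w}) \ I := ⟨Or.inr (Or.inr rfl), hwI⟩
  have hXint : IsIntervalOn A (X ∪ {w}) X := by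
    refine ⟨Set.subset_union_left, ?_⟩
    intro v hv
    have hvw : v = w := by
      rcases hv.1 with h | h
      · exact absurd h hv.2
      · exact h
    rw [hvw]
    rcases hIint.2 w hwmem with h | h
    · exact Or.inl fun i hi => h i (hsub (Or.inl hi))
    · exact Or.inr fun i hi => h i (hsub (Or.inl hi))
  rcases hwind X hXint with h | ⟨v, hv⟩ | h
  · rw [h, Set.ncard_empty] at hX3; omega
  · rw [hv, Set.ncard_singleton] at hX3; omega
  · exact hw (h ▸ (Or.inr rfl : w ∈ X ∪ {w}))

/-- For distinct `x, y ∈ Ext(X)`, if `T[X ∪ {x,y}]` is decomposable then `{x,y}` is an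
interval of `T[X ∪ {x,y}]`. -/
theorem ext_case {V : Type*} [Fintype V] (A : V → V → Prop)
    (hA : IsTournament A) (X : Set V) (hX3 : 3 ≤ X.ncard)
    (hXind : IndecomposableOn A X)
    (x : V) (hx : x ∈ extSet A X) (y : V) (hy : y ∈ extSet A X) (hxy : x ≠ y)
    (hdec : ¬ IndecomposableOn A (X ∪ {x, y})) :
    IsIntervalOn A (X ∪ {x, y}) {x, y} := by
  classical
  obtain ⟨hxX, hxind⟩ := hx
  obtain ⟨hyX, hyind⟩ := hy
  simp only [IndecomposableOn, not_forall] at hdec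
  obtain ⟨I, hIint, hInt⟩ := hdec
  have hIsub : I ⊆ X ∪ {x, y} := hIint.1
  have hne : ¬ I = ∅ ∧ (∀ v : V, ¬ I = {v}) ∧ ¬ I = X ∪ {x, y} := by
    simp only [IsTrivialOn, not_or, not_exists] at hInt
    exact hInt
  have hsubx : X ∪ {x} ⊆ X ∪ ({x, y} : Set V) :=
    Set.union_subset_union_right X (by simp)
  have hsuby : X ∪ {y} ⊆ X ∪ ({x, y} : Set V) :=
    Set.union_subset_union_right X (by simp)
  have hpair : X ∪ ({x, y} : Set V) = X ∪ {y, x} := by rw [Set.pair_comm]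
  rcases hxind (I ∩ (X ∪ {x})) (interval_inter A hsubx hIint) with h0 | ⟨a, ha⟩ | hfull
  · -- I ∩ (X ∪ {x}) = ∅ : then I ⊆ {y}
    have hIy : I ⊆ ({y} : Set V) := by
      intro u hu
      rcases hIsub hu with h | h
      · have hm : u ∈ I ∩ (X ∪ {x}) := ⟨hu, Or.inl h⟩
        rw [h0] at hm; exact absurd hm (Set.notMem_empty u)
      · rcases h with rfl | rfl
        · have hm : u ∈ I ∩ (X ∪ {u}) := ⟨hu, Or.inr rfl⟩
          rw [h0] at hm; exact absurd hm (Set.notMem_empty u)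
        · rfl
    rcases Set.subset_singleton_iff_eq.mp hIy with h | h
    · exact absurd h hne.1
    · exact absurd h (hne.2.1 y)
  · -- I ∩ (X ∪ {x}) = {a}
    rcases hyind (I ∩ (X ∪ {y})) (interval_inter A hsuby hIint) with h0 | ⟨b, hb⟩ | hfull
    · -- symmetric empty case
      have hIx : I ⊆ ({x} : Set V) := by
        intro u hu
        rcases hIsub hu with h | h
        · have hm : u ∈ I ∩ (X ∪ {y}) := ⟨hu, Or.inl h⟩
          rw [h0] at hm; exact absurd hm (Set.notMem_empty u)
        · rcases h with rfl | rfl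
          · rfl
          · have hm : u ∈ I ∩ (X ∪ {u}) := ⟨hu, Or.inr rfl⟩
            rw [h0] at hm; exact absurd hm (Set.notMem_empty u)
      rcases Set.subset_singleton_iff_eq.mp hIx with h | h
      · exact absurd h hne.1
      · exact absurd h (hne.2.1 x)
    · -- both singletons: show I = {x, y}
      have hIX : I ∩ X = ∅ := by
        by_contra hns
        obtain ⟨u, huI, huX⟩ := Set.nonempty_iff_ne_empty.mpr hns
        have hau : a = u := by
          have : u ∈ ({a} : Set V) := ha ▸ Set.mem_inter huI (Or.inl huX)
          exact this.symm
        have hxI : x ∉ I := by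
          intro hxI
          have : x ∈ ({a} : Set V) := ha ▸ Set.mem_inter hxI (Or.inr rfl)
          rw [Set.mem_singleton_iff] at this
          exact hxX (this ▸ hau ▸ huX)
        have hyI : y ∉ I := by
          intro hyI
          have hbu : b = u := by
            have : u ∈ ({b} : Set V) := hb ▸ Set.mem_inter huI (Or.inl huX)
            exact this.symm
          have : y ∈ ({b} : Set V) := hb ▸ Set.mem_inter hyI (Or.inr rfl)
          rw [Set.mem_singleton_iff] at this
          exact hyX (this ▸ hbu ▸ huX)
        have hIa : I = {a} := by
          rw [← ha]
          apply Set.Subset.antisymm _ Set.inter_subset_left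
          intro v hv
          refine Set.mem_inter hv ?_
          rcases hIsub hv with h | h
          · exact Or.inl h
          · rcases h with rfl | rfl
            · exact absurd hv hxI
            · exact absurd hv hyI
        exact hne.2.1 a hIa
      have hIxy : I ⊆ ({x, y} : Set V) := by
        intro u hu
        rcases hIsub hu with h | h
        · exact absurd (Set.mem_inter hu h) (by rw [hIX]; simp)
        · exact h
      have hxI : x ∈ I := by
        by_contra hxI
        have hIy : I ⊆ ({y} : Set V) := by
          intro u hu
          rcases hIxy hu with rfl | rfl
          · exact absurd hu hxI
          · rfl
        rcases Set.subset_singleton_iff_eq.mp hIy with h | h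
        · exact absurd h hne.1
        · exact absurd h (hne.2.1 y)
      have hyI : y ∈ I := by
        by_contra hyI
        have hIx : I ⊆ ({x} : Set V) := by
          intro u hu
          rcases hIxy hu with rfl | rfl
          · rfl
          · exact absurd hu hyI
        rcases Set.subset_singleton_iff_eq.mp hIx with h | h
        · exact absurd h hne.1
        · exact absurd h (hne.2.1 x)
      have : I = ({x, y} : Set V) := by
        apply Set.Subset.antisymm hIxy
        intro u hu
        rcases hu with rfl | rfl
        · exact hxI
        · exact hyI
      exact this ▸ hIint
    · -- I ∩ (X ∪ {y}) = X ∪ {y}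
      have hsub : X ∪ {y} ⊆ I := by
        rw [← hfull]; exact Set.inter_subset_left
      exact absurd (key_contra A hX3 hxX hxind (hpair ▸ hIint) (hpair ▸ hne.2.2) hsub) id
  · -- I ∩ (X ∪ {x}) = X ∪ {x}
    have hsub : X ∪ {x} ⊆ I := by
      rw [← hfull]; exact Set.inter_subset_left
    exact absurd (key_contra A hX3 hyX hyind hIint hne.2.2 hsub) id
end

section
/- Let T = (V,A) be a tournament, X ⊆ V with |X| ≥ 3 and T[X] indecomposable. For x ∈ ⟨X⟩ and y ∈ V \ (X ∪ ⟨X⟩), if T[X ∪ {x,y}] is decomposable then X ∪ {y} is an interval of T[X ∪ {x,y}]. -/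
/-- Helper: if some `u ∈ X` is uniformly comparable with all of `X \ {u}`, then `X \ {u}`
is an interval of `T[X]`, contradicting indecomposability when `|X| ≥ 3`. -/
lemma aux_diff {V : Type*} [Fintype V] (A : V → V → Prop) (X : Set V) (h3 : 3 ≤ X.ncard)
    (hXind : IndecomposableOn A X) (u : V) (hu : u ∈ X)
    (hall : (∀ v ∈ X \ {u}, A u v) ∨ ∀ v ∈ X \ {u}, A v u) : False := by
  have hfin : X.Finite := Set.toFinite X
  have hint : IsIntervalOn A X (X \ {u}) := by
    refine ⟨Set.diff_subset, fun z hz => ?_⟩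
    have hzu : z = u := by
      by_contra h
      exact hz.2 ⟨hz.1, by simp [h]⟩
    subst hzu
    rcases hall with h | h
    · exact Or.inl h
    · exact Or.inr h
  have hcard : (X \ {u}).ncard + 1 = X.ncard := Set.ncard_diff_singleton_add_one hu hfin
  rcases hXind _ hint with h | ⟨v, hv⟩ | h
  · rw [h] at hcard; simp at hcard; omega
  · rw [hv] at hcard; simp at hcard; omega
  · have : u ∈ X \ {u} := by rw [h]; exact hu
    simp at this

/-- For `x ∈ ⟨X⟩` and `y ∉ X ∪ ⟨X⟩`, if `T[X ∪ {x,y}]` is decomposable then `X ∪ {y}` is an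
interval of `T[X ∪ {x,y}]`. -/
theorem bracket_case {V : Type*} [Fintype V] (A : V → V → Prop)
    (hA : IsTournament A) (X : Set V) (hX3 : 3 ≤ X.ncard)
    (hXind : IndecomposableOn A X)
    (x : V) (hx : x ∈ bracketSet A X)
    (y : V) (hy : y ∉ X ∪ bracketSet A X)
    (hdec : ¬ IndecomposableOn A (X ∪ {x, y})) :
    IsIntervalOn A (X ∪ {x, y}) (X ∪ {y}) := by
  classical
  obtain ⟨hxX, hxcmp⟩ := hx
  have hyX : y ∉ X := fun h => hy (Or.inl h)
  have hyB : y ∉ bracketSet A X := fun h => hy (Or.inr h)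
  have hxy : x ≠ y := fun h => hyB (h ▸ ⟨hxX, hxcmp⟩)
  have key : ∀ a b : V, a ≠ b → A a b → ¬ A b a := fun a b h hab => (hA.2 a b h).1 hab
  have hxW : x ∈ X ∪ {x, y} := Or.inr (by simp)
  have hyW : y ∈ X ∪ {x, y} := Or.inr (by simp)
  rw [IndecomposableOn] at hdec
  push_neg at hdec
  obtain ⟨I, hI, hnt⟩ := hdec
  obtain ⟨hIsub, hIuni⟩ := hI
  rw [IsTrivialOn] at hnt
  push_neg at hnt
  obtain ⟨hne, hsing, hnW⟩ := hnt
  -- I ∩ X is an interval of T[X]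
  have hIX : IsIntervalOn A X (I ∩ X) := by
    refine ⟨Set.inter_subset_right, fun u hu => ?_⟩
    have huI : u ∉ I := fun h => hu.2 ⟨h, hu.1⟩
    rcases hIuni u ⟨Or.inl hu.1, huI⟩ with h | h
    · exact Or.inl fun i hi => h i hi.1
    · exact Or.inr fun i hi => h i hi.1
  rcases hXind _ hIX with hempty | ⟨u, huEq⟩ | hfull
  · -- I ∩ X = ∅, so I = {x, y}
    have hsub : I ⊆ {x, y} := by
      intro v hv
      rcases hIsub hv with h | h
      · exact absurd (Set.eq_empty_iff_forall_notMem.1 hempty v ⟨hv, h⟩) (fun h => h)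
      · exact h
    have hxI : x ∈ I := by
      by_contra h
      have : I ⊆ {y} := fun v hv => by
        rcases hsub hv with h' | h'
        · exact absurd (h' ▸ hv) h
        · exact h'
      rcases Set.subset_singleton_iff_eq.1 this with h' | h'
      · exact hne.ne_empty h'
      · exact hsing y h'
    have hyI : y ∈ I := by
      by_contra h
      have : I ⊆ {x} := fun v hv => by
        rcases hsub hv with h' | h'
        · exact h'
        · exact absurd (h' ▸ hv) h
      rcases Set.subset_singleton_iff_eq.1 this with h' | h'
      · exact hne.ne_empty h'
      · exact hsing x h'
    exfalso
    rcases hxcmp with hxall | hallx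
    · refine hyB ⟨hyX, Or.inl fun u hu => ?_⟩
      have huI : u ∉ I := fun h => Set.eq_empty_iff_forall_notMem.1 hempty u ⟨h, hu⟩
      rcases hIuni u ⟨Or.inl hu, huI⟩ with h | h
      · exact absurd (h x hxI) (key x u (fun h' => hxX (h' ▸ hu)) (hxall u hu))
      · exact h y hyI
    · refine hyB ⟨hyX, Or.inr fun u hu => ?_⟩
      have huI : u ∉ I := fun h => Set.eq_empty_iff_forall_notMem.1 hempty u ⟨h, hu⟩
      rcases hIuni u ⟨Or.inl hu, huI⟩ with h | h
      · exact h y hyI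
      · exact absurd (h x hxI) (key u x (fun h' => hxX (h' ▸ hu)) (hallx u hu))
  · -- I ∩ X = {u}
    have hu : u ∈ I ∩ X := huEq ▸ rfl
    have huI : u ∈ I := hu.1
    have huX : u ∈ X := hu.2
    have hvnotI : ∀ v ∈ X, v ≠ u → v ∉ I := by
      intro v hv hvu hvI
      exact hvu (Set.mem_singleton_iff.1 (huEq ▸ (⟨hvI, hv⟩ : v ∈ I ∩ X)))
    by_cases hxI : x ∈ I
    · -- contradiction via aux_diff
      exfalso
      rcases hxcmp with hxall | hallx
      · refine aux_diff A X hX3 hXind u huX (Or.inl fun v hv => ?_)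
        have hvI : v ∉ I := hvnotI v hv.1 (by simpa using hv.2)
        rcases hIuni v ⟨Or.inl hv.1, hvI⟩ with h | h
        · exact absurd (h x hxI) (key x v (fun h' => hxX (h' ▸ hv.1)) (hxall v hv.1))
        · exact h u huI
      · refine aux_diff A X hX3 hXind u huX (Or.inr fun v hv => ?_)
        have hvI : v ∉ I := hvnotI v hv.1 (by simpa using hv.2)
        rcases hIuni v ⟨Or.inl hv.1, hvI⟩ with h | h
        · exact h u huI
        · exact absurd (h x hxI) (key v x (fun h' => hxX (h' ▸ hv.1)) (hallx v hv.1))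
    · -- x ∉ I, so y ∈ I, and then the conclusion follows
      have hyI : y ∈ I := by
        by_contra hyI
        have hsub : I ⊆ {u} := by
          intro v hv
          rcases hIsub hv with h | h
          · exact Set.mem_singleton_iff.2
              (Set.mem_singleton_iff.1 (huEq ▸ (⟨hv, h⟩ : v ∈ I ∩ X)))
          · rcases h with h | h
            · exact absurd (h ▸ hv) hxI
            · exact absurd ((Set.mem_singleton_iff.1 h) ▸ hv) hyI
        rcases Set.subset_singleton_iff_eq.1 hsub with h' | h'
        · exact hne.ne_empty h'
        · exact hsing u h'
      rcases hIuni x ⟨hxW, hxI⟩ with h | h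
      · -- x beats u and y
        have hAxy : A x y := h y hyI
        refine ⟨fun v hv => ?_, fun z hz => ?_⟩
        · rcases hv with hv | hv
          · exact Or.inl hv
          · exact Or.inr (Or.inr hv)
        · have hzx : z = x := by
            rcases hz.1 with h' | h'
            · exact absurd (Or.inl h') hz.2
            · rcases h' with h' | h'
              · exact h'
              · exact absurd (Or.inr h') hz.2
          rw [hzx]
          refine Or.inl fun i hi => ?_
          rcases hi with hi | hi
          · rcases hxcmp with hxall | hallx
            · exact hxall i hi
            · exact absurd (h u huI) (key u x (fun h' => hxX (h' ▸ huX)) (hallx u huX))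
          · exact (Set.mem_singleton_iff.1 hi) ▸ hAxy
      · -- u and y beat x
        have hAyx : A y x := h y hyI
        refine ⟨fun v hv => ?_, fun z hz => ?_⟩
        · rcases hv with hv | hv
          · exact Or.inl hv
          · exact Or.inr (Or.inr hv)
        · have hzx : z = x := by
            rcases hz.1 with h' | h'
            · exact absurd (Or.inl h') hz.2
            · rcases h' with h' | h'
              · exact h'
              · exact absurd (Or.inr h') hz.2
          rw [hzx]
          refine Or.inr fun i hi => ?_
          rcases hi with hi | hi
          · rcases hxcmp with hxall | hallx
            · exact absurd (h u huI) (key x u (fun h' => hxX (h' ▸ huX)) (hxall u huX))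
            · exact hallx i hi
          · exact (Set.mem_singleton_iff.1 hi) ▸ hAyx
  · -- I ∩ X = X
    have hXI : X ⊆ I := fun v hv => by rw [← hfull] at hv; exact hv.1
    by_cases hyI : y ∈ I
    · by_cases hxI : x ∈ I
      · exact absurd (Set.Subset.antisymm hIsub (fun v hv => by
          rcases hv with hv | hv
          · exact hXI hv
          · rcases hv with hv | hv
            · exact hv ▸ hxI
            · exact (Set.mem_singleton_iff.1 hv) ▸ hyI)) hnW
      · have hIeq : I = X ∪ {y} := by
          apply Set.Subset.antisymm
          · intro v hv
            rcases hIsub hv with h | h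
            · exact Or.inl h
            · rcases h with h | h
              · exact absurd (h ▸ hv) hxI
              · exact Or.inr h
          · intro v hv
            rcases hv with hv | hv
            · exact hXI hv
            · exact (Set.mem_singleton_iff.1 hv) ▸ hyI
        refine ⟨fun v hv => ?_, fun z hz => ?_⟩
        · rcases hv with hv | hv
          · exact Or.inl hv
          · exact Or.inr (Or.inr hv)
        · have hzx : z = x := by
            rcases hz.1 with h' | h'
            · exact absurd (Or.inl h') hz.2
            · rcases h' with h' | h'
              · exact h'
              · exact absurd (Or.inr h') hz.2
          rw [hzx]
          have := hIuni x ⟨hxW, fun h => hz.2 (by rw [hzx, ← hIeq]; exact h)⟩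
          rw [hIeq] at this
          exact this
    · exfalso
      rcases hIuni y ⟨hyW, hyI⟩ with h | h
      · exact hyB ⟨hyX, Or.inl fun v hv => h v (hXI hv)⟩
      · exact hyB ⟨hyX, Or.inr fun v hv => h v (hXI hv)⟩
end

section
/- The Paley tournament P₇ on 7 vertices is indecomposable and omits W₅, i.e., no 5-element subset of its vertices induces a subtournament isomorphic to W₅. -/
/-- The Paley tournament `P₇` on `ZMod 7`: `i` beats `j` iff `j - i ∈ {1,2,4}` mod 7. -/
def P7arc (i j : ZMod 7) : Prop :=
  (j - i).val ∈ ({1, 2, 4} : Set ℕ)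

/-- Boolean version of the arc relation of `P₇`. -/
def PB (i j : ZMod 7) : Bool := (j - i).val == 1 || (j - i).val == 2 || (j - i).val == 4

lemma P7arc_iff (i j : ZMod 7) : P7arc i j ↔ PB i j = true := by
  simp [P7arc, PB]; tauto

/-- Boolean version of the arc relation of `W₅` on `Fin 5`. -/
def WB (k l : Fin 5) : Bool :=
  (k.val < 4 && l.val < 4 && k.val < l.val) || (k.val == 4 && l.val < 4 && l.val % 2 == 0)
    || (l.val == 4 && k.val < 4 && k.val % 2 == 1)

lemma Warc_iff (k l : Fin 5) : Warc 2 k l ↔ WB k l = true := by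
  simp [Warc, WB, Nat.even_iff, Nat.odd_iff]; tauto

set_option maxRecDepth 10000 in
lemma P7_ind_aux : ∀ S : Finset (ZMod 7),
    (∀ x, x ∉ S → (∀ i ∈ S, PB x i) ∨ (∀ i ∈ S, PB i x)) → S.card ≤ 1 ∨ S = Finset.univ := by
  decide

set_option maxRecDepth 100000 in
lemma noW5_aux : ∀ b c d e : ZMod 7,
    ¬ ∀ k l : Fin 5, (WB k l = true ↔ PB (![0,b,c,d,e] k) (![0,b,c,d,e] l) = true) := by
  decide

lemma PB_translate (i j t : ZMod 7) : PB (i - t) (j - t) = PB i j := by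
  simp [PB, sub_sub_sub_cancel_right]

/-- The Paley tournament `P₇` is indecomposable and omits `W₅`. -/
theorem P7_indecomposable_omits_W5 :
    IndecomposableOn P7arc (Set.univ : Set (ZMod 7)) ∧
    ¬ ∃ X : Set (ZMod 7), IsoOn (Warc 2) P7arc (Set.Iic 4 : Set ℕ) X := by
  constructor
  · intro I hI
    obtain ⟨-, h2⟩ := hI
    set S := I.toFinite.toFinset with hS
    have hmem : ∀ x, x ∈ S ↔ x ∈ I := fun x => Set.Finite.mem_toFinset _
    rcases P7_ind_aux S (by
        intro x hx
        rcases h2 x ⟨trivial, fun hxI => hx ((hmem x).mpr hxI)⟩ with h | h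
        · exact Or.inl fun i hi => (P7arc_iff _ _).mp (h i ((hmem i).mp hi))
        · exact Or.inr fun i hi => (P7arc_iff _ _).mp (h i ((hmem i).mp hi))) with h | h
    · by_cases hem : I = ∅
      · exact Or.inl hem
      · obtain ⟨v, hv⟩ := Set.nonempty_iff_ne_empty.mpr hem
        refine Or.inr (Or.inl ⟨v, Set.ext fun x => ⟨fun hx => ?_, fun hx => hx ▸ hv⟩⟩)
        exact Finset.card_le_one.mp h x ((hmem x).mpr hx) v ((hmem v).mpr hv)
    · refine Or.inr (Or.inr (Set.ext fun x => ⟨fun _ => trivial, fun _ => ?_⟩))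
      exact (hmem x).mp (h ▸ Finset.mem_univ x)
  · rintro ⟨X, f, -, hiff⟩
    set g0 : Fin 5 → ZMod 7 :=
      fun k => (f ⟨(k : ℕ), by exact Nat.lt_succ_iff.mp k.isLt⟩ : ZMod 7) with hg0
    have key : ∀ k l : Fin 5, WB k l = true ↔ PB (g0 k) (g0 l) = true := by
      intro k l
      rw [← Warc_iff, ← P7arc_iff]
      exact hiff ⟨(k : ℕ), Nat.lt_succ_iff.mp k.isLt⟩ ⟨(l : ℕ), Nat.lt_succ_iff.mp l.isLt⟩
    apply noW5_aux (g0 1 - g0 0) (g0 2 - g0 0) (g0 3 - g0 0) (g0 4 - g0 0)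
    intro k l
    have hvec : ∀ m : Fin 5,
        ![0, g0 1 - g0 0, g0 2 - g0 0, g0 3 - g0 0, g0 4 - g0 0] m = g0 m - g0 0 := by
      intro m; fin_cases m <;> simp
    rw [hvec k, hvec l, PB_translate]
    exact key k l
end

section
/- For n ≥ 2, the indecomposable subtournaments of W_{2n+1} on at least 5 vertices are, up to isomorphism, exactly the tournaments W_{2m+1} for 2 ≤ m ≤ n. -/
/-!
An indecomposable `Y ⊆ {0, …, 2n}` with at least three vertices contains the apex `2n`: otherwise
`Y` is a chain and its least element is a source. Enumerate `Y` increasingly as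
`c₀ < ⋯ < c_k = 2n`. Consecutive `cᵢ, cᵢ₊₁` below the apex differ in parity (else they form an
interval), `c₀` is even (else it is a source) and `c_{k-1}` is odd (else it is a sink). Hence
`cᵢ ≡ i (mod 2)` and `k` is even, so `i ↦ cᵢ` is an isomorphism from `W_{k+1}`. Conversely
`W_{2m+1}` is indecomposable and embeds in `W_{2n+1}` by `i ↦ i` for `i < 2m` and `2m ↦ 2n`.
-/

open Set

section Intervals

variable {V W : Type*} {A : V → V → Prop} {B : W → W → Prop} {X I : Set V}

theorem indecomposableOn_iff :
    IndecomposableOn A X ↔ ∀ I, IsIntervalOn A X I → ∀ a ∈ I, ∀ b ∈ I, a ≠ b → X ⊆ I := by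
  constructor
  · intro h I hI a ha b hb hab
    rcases h I hI with rfl | ⟨v, rfl⟩ | rfl
    · exact absurd ha (notMem_empty a)
    · exact absurd (ha.trans hb.symm) hab
    · exact subset_rfl
  · intro h I hI
    by_cases hI2 : I.Subsingleton
    · rcases hI2.eq_empty_or_singleton with h0 | h1
      exacts [Or.inl h0, Or.inr (Or.inl h1)]
    · obtain ⟨a, ha, b, hb, hab⟩ := not_subsingleton_iff.1 hI2
      exact Or.inr (Or.inr (hI.1.antisymm (h I hI a ha b hb hab)))

theorem IsIntervalOn.mem_of_arc_of_arc (hA : ∀ x y, A x y → ¬ A y x) (hI : IsIntervalOn A X I)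
    {x p q : V} (hx : x ∈ X) (hp : p ∈ I) (hq : q ∈ I) (hxp : A x p) (hqx : A q x) : x ∈ I := by
  by_contra hxI
  rcases hI.2 x ⟨hx, hxI⟩ with h | h
  · exact hA q x hqx (h q hq)
  · exact hA x p hxp (h p hp)

theorem IndecomposableOn.not_isIntervalOn_sdiff_singleton (h : IndecomposableOn A X)
    (hX : 2 < X.ncard) {x : V} (hx : x ∈ X) : ¬ IsIntervalOn A X (X \ {x}) := by
  intro hI
  have hfin : X.Finite := finite_of_ncard_pos (by omega)
  have hcard := ncard_sdiff_singleton_add_one hx hfin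
  obtain ⟨a, b, ha, hb, hab⟩ := (one_lt_ncard_iff (hfin.sdiff (t := {x}))).1 (by omega)
  exact (indecomposableOn_iff.1 h _ hI a ha b hb hab hx).2 rfl

theorem IndecomposableOn.exists_not_arc_from (h : IndecomposableOn A X) (hX : 2 < X.ncard)
    {x : V} (hx : x ∈ X) : ∃ y ∈ X, y ≠ x ∧ ¬ A x y := by
  by_contra! hsrc
  refine h.not_isIntervalOn_sdiff_singleton hX hx ⟨sdiff_subset, fun z hz => Or.inl ?_⟩
  obtain rfl : z = x := by simpa [hz.1] using hz.2
  exact fun y hy => hsrc y hy.1 hy.2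

theorem IndecomposableOn.exists_not_arc_to (h : IndecomposableOn A X) (hX : 2 < X.ncard)
    {x : V} (hx : x ∈ X) : ∃ y ∈ X, y ≠ x ∧ ¬ A y x := by
  by_contra! hsink
  refine h.not_isIntervalOn_sdiff_singleton hX hx ⟨sdiff_subset, fun z hz => Or.inr ?_⟩
  obtain rfl : z = x := by simpa [hz.1] using hz.2
  exact fun y hy => hsink y hy.1 hy.2

theorem IndecomposableOn.exists_separating (h : IndecomposableOn A X) (hX : 2 < X.ncard)
    {a b : V} (ha : a ∈ X) (hb : b ∈ X) (hab : a ≠ b) :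
    ∃ x ∈ X, x ≠ a ∧ x ≠ b ∧ ¬ ((A x a ∧ A x b) ∨ (A a x ∧ A b x)) := by
  by_contra! htwins
  have hI : IsIntervalOn A X {a, b} := by
    refine ⟨insert_subset ha (singleton_subset_iff.2 hb), fun x hx => ?_⟩
    simp only [mem_sdiff, mem_insert_iff, mem_singleton_iff, not_or] at hx
    rcases htwins x hx.1 hx.2.1 hx.2.2 with ⟨hxa, hxb⟩ | ⟨hax, hbx⟩
    · exact Or.inl (by rintro _ (rfl | rfl) <;> assumption)
    · exact Or.inr (by rintro _ (rfl | rfl) <;> assumption)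
  have hsub := indecomposableOn_iff.1 h _ hI a (by simp) b (by simp) hab
  have := ncard_le_ncard hsub (toFinite _)
  rw [ncard_pair hab] at this
  omega

theorem isoOn_image {f : V → W} (hf : InjOn f X)
    (hfA : ∀ a ∈ X, ∀ b ∈ X, A a b ↔ B (f a) (f b)) : IsoOn A B X (f '' X) :=
  ⟨hf.bijOn_image.equiv f, Equiv.bijective _, fun a b => hfA a a.2 b b.2⟩

theorem IndecomposableOn.image {f : V → W}
    (hfA : ∀ a ∈ X, ∀ b ∈ X, A a b ↔ B (f a) (f b)) (h : IndecomposableOn A X) :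
    IndecomposableOn B (f '' X) := by
  rw [indecomposableOn_iff] at h ⊢
  intro I hI _ hu _ hv huv
  obtain ⟨a, ha, rfl⟩ := hI.1 hu
  obtain ⟨b, hb, rfl⟩ := hI.1 hv
  have hJ : IsIntervalOn A X (X ∩ f ⁻¹' I) := by
    refine ⟨inter_subset_left, fun x hx => ?_⟩
    have hxX : x ∈ X := hx.1
    rcases hI.2 (f x) ⟨mem_image_of_mem f hxX, fun hxI => hx.2 ⟨hxX, hxI⟩⟩ with hxI | hxI
    · exact Or.inl fun i hi => (hfA x hxX i hi.1).2 (hxI _ hi.2)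
    · exact Or.inr fun i hi => (hfA i hi.1 x hxX).2 (hxI _ hi.2)
  rintro _ ⟨x, hx, rfl⟩
  exact (h _ hJ a ⟨ha, hu⟩ b ⟨hb, hv⟩ (fun hab => huv (hab ▸ rfl)) hx).2

end Intervals

theorem warc_iff_mod_two (n i j : ℕ) : Warc n i j ↔
    (i < 2*n ∧ j < 2*n ∧ i < j) ∨ (i = 2*n ∧ j < 2*n ∧ j % 2 = 0) ∨
      (j = 2*n ∧ i < 2*n ∧ i % 2 = 1) := by
  simp only [Warc, Nat.even_iff, Nat.odd_iff]

theorem warc_asymm (n i j : ℕ) : Warc n i j → ¬ Warc n j i := by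
  simp only [warc_iff_mod_two]
  omega

/-- An interval with two vertices contains the apex `2m` (it separates any two consecutive vertices
of the chain), then the extremities `0` and `2m - 1` of the chain, hence everything in between. -/
theorem indecomposableOn_warc (m : ℕ) : IndecomposableOn (Warc m) (Iic (2*m)) := by
  rw [indecomposableOn_iff]
  intro I hI a ha b hb hab
  have close {x p q : ℕ} (hx : x ≤ 2*m) := hI.mem_of_arc_of_arc (warc_asymm m) (p := p) (q := q) hx
  have hab_le : a ≤ 2*m ∧ b ≤ 2*m := ⟨hI.1 ha, hI.1 hb⟩
  have htop : 2*m ∈ I := by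
    wlog hlt : a < b generalizing a b
    · exact this b hb a ha hab.symm ⟨hab_le.2, hab_le.1⟩ (by omega)
    by_cases hb2 : b = 2*m
    · exact hb2 ▸ hb
    have hsucc : a + 1 ∈ I := by
      rcases eq_or_ne (a + 1) b with h | h
      · exact h ▸ hb
      · refine close (by omega) hb ha ?_ ?_ <;> rw [warc_iff_mod_two] <;> omega
    rcases Nat.mod_two_eq_zero_or_one a with h | h
    · refine close (by omega) ha hsucc ?_ ?_ <;> rw [warc_iff_mod_two] <;> omega
    · refine close (by omega) hsucc ha ?_ ?_ <;> rw [warc_iff_mod_two] <;> omega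
  obtain ⟨v, hv, hv2⟩ : ∃ v ∈ I, v < 2*m := by
    by_cases ha2 : a = 2*m
    exacts [⟨b, hb, by omega⟩, ⟨a, ha, by omega⟩]
  have hlast_of_zero (h0 : 0 ∈ I) : 2*m - 1 ∈ I := by
    refine close (by omega) htop h0 ?_ ?_ <;> rw [warc_iff_mod_two] <;> omega
  have hzero : 0 ∈ I := by
    rcases Nat.mod_two_eq_zero_or_one v with h | h
    · have hlast : 2*m - 1 ∈ I := by
        refine close (by omega) htop hv ?_ ?_ <;> rw [warc_iff_mod_two] <;> omega
      refine close (by omega) hlast htop ?_ ?_ <;> rw [warc_iff_mod_two] <;> omega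
    · refine close (by omega) hv htop ?_ ?_ <;> rw [warc_iff_mod_two] <;> omega
  have hlast := hlast_of_zero hzero
  intro x hx
  rw [mem_Iic] at hx
  by_cases hxm : x = 2*m
  · exact hxm ▸ htop
  by_cases hx0 : x = 0
  · exact hx0 ▸ hzero
  by_cases hxl : x = 2*m - 1
  · exact hxl ▸ hlast
  refine close (by omega) hlast hzero ?_ ?_ <;> rw [warc_iff_mod_two] <;> omega

section Enumeration

variable {n k : ℕ} {f : ℕ → ℕ}

theorem exists_strictMonoOn_image_Iic {Y : Set ℕ} (hY : Y.Finite) (hk : Y.ncard = k + 1) :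
    ∃ f : ℕ → ℕ, StrictMonoOn f (Iic k) ∧ f '' Iic k = Y := by
  have hIic : Iic k = Iio hY.toFinset.card := by
    ext; rw [mem_Iic, mem_Iio, ← ncard_eq_toFinset_card Y hY]; omega
  exact ⟨Nat.nth (· ∈ Y), hIic ▸ Nat.nth_strictMonoOn hY, hIic ▸ Nat.image_nth_Iio_card hY⟩

theorem ncard_image_Iic (hf : StrictMonoOn f (Iic k)) : (f '' Iic k).ncard = k + 1 := by
  rw [hf.injOn.ncard_image]
  simp

theorem warc_comp_iff (hf : StrictMonoOn f (Iic k)) (hk : f k = 2*n) {i j : ℕ} (hi : i ≤ k)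
    (hj : j ≤ k) : Warc n (f i) (f j) ↔
      (i < k ∧ j < k ∧ i < j) ∨ (i = k ∧ j < k ∧ f j % 2 = 0) ∨ (j = k ∧ i < k ∧ f i % 2 = 1) := by
  have below {l : ℕ} (hl : l ≤ k) : (l < k ∧ f l < 2*n) ∨ (l = k ∧ f l = 2*n) := by
    rcases hl.lt_or_eq with hl | rfl
    · exact Or.inl ⟨hl, hk ▸ hf hl.le (le_refl k) hl⟩
    · exact Or.inr ⟨rfl, hk⟩
  have := hf.lt_iff_lt hi hj
  have := below hi
  have := below hj
  rw [warc_iff_mod_two]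
  omega

theorem apex_eq_of_indecomposableOn (hf : StrictMonoOn f (Iic k)) (hk : 2 ≤ k) (hfk : f k ≤ 2*n)
    (hY : IndecomposableOn (Warc n) (f '' Iic k)) : f k = 2*n := by
  by_contra hne
  obtain ⟨_, ⟨j, (hj : j ≤ k), rfl⟩, hj0, hnarc⟩ :=
    hY.exists_not_arc_from (by rw [ncard_image_Iic hf]; omega) (mem_image_of_mem f (Nat.zero_le k))
  have hj0 : 0 < j := Nat.pos_of_ne_zero fun h => hj0 (by rw [h])
  have := hf (Nat.zero_le k) hj hj0
  have := hf.monotoneOn hj (le_refl k) hj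
  exact hnarc (by rw [warc_iff_mod_two]; omega)

theorem mod_two_eq_of_indecomposableOn (hf : StrictMonoOn f (Iic k)) (hk : 2 ≤ k)
    (hfk : f k = 2*n) (hY : IndecomposableOn (Warc n) (f '' Iic k)) :
    (∀ i < k, f i % 2 = i % 2) ∧ k % 2 = 0 := by
  have hX : 2 < (f '' Iic k).ncard := by rw [ncard_image_Iic hf]; omega
  have mem {i : ℕ} (hi : i ≤ k) : f i ∈ f '' Iic k := mem_image_of_mem f hi
  have arc {i j : ℕ} := @warc_comp_iff n k f hf hfk i j
  have hfirst : f 0 % 2 = 0 := by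
    by_contra hodd
    obtain ⟨_, ⟨j, (hj : j ≤ k), rfl⟩, hj0, hnarc⟩ :=
      hY.exists_not_arc_from hX (mem (Nat.zero_le k))
    have : j ≠ 0 := fun h => hj0 (by rw [h])
    rw [arc (Nat.zero_le k) hj] at hnarc
    omega
  have hlast : f (k - 1) % 2 = 1 := by
    by_contra heven
    obtain ⟨_, ⟨j, (hj : j ≤ k), rfl⟩, hj1, hnarc⟩ :=
      hY.exists_not_arc_to hX (mem (Nat.sub_le k 1))
    have : j ≠ k - 1 := fun h => hj1 (by rw [h])
    rw [arc hj (Nat.sub_le k 1)] at hnarc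
    omega
  have hstep (i : ℕ) (hi : i + 1 < k) : f (i + 1) % 2 ≠ f i % 2 := by
    intro hsame
    obtain ⟨_, ⟨j, (hj : j ≤ k), rfl⟩, hji, hji1, hsep⟩ :=
      hY.exists_separating hX (mem (i := i) (by omega)) (mem (i := i + 1) hi.le)
        (hf.injOn.ne (by simp; omega) (by simp; omega) (by omega))
    have : j ≠ i := fun h => hji (by rw [h])
    have : j ≠ i + 1 := fun h => hji1 (by rw [h])
    rw [arc hj (by omega), arc hj hi.le, arc (by omega) hj, arc hi.le hj] at hsep
    omega
  have hpar (i : ℕ) : i < k → f i % 2 = i % 2 := by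
    induction i with
    | zero => exact fun _ => hfirst
    | succ i ih =>
      intro hi
      have := hstep i hi
      have := ih (by omega)
      omega
  exact ⟨hpar, by have := hpar (k - 1) (by omega); omega⟩

theorem warc_iff_warc_comp {m : ℕ} (hf : StrictMonoOn f (Iic (2*m))) (hfm : f (2*m) = 2*n)
    (hpar : ∀ i < 2*m, f i % 2 = i % 2) :
    ∀ i ∈ Iic (2*m), ∀ j ∈ Iic (2*m), Warc m i j ↔ Warc n (f i) (f j) := by
  intro i hi j hj
  rw [warc_comp_iff hf hfm hi hj, warc_iff_mod_two]
  have hi' : i < 2*m → f i % 2 = i % 2 := hpar i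
  have hj' : j < 2*m → f j % 2 = j % 2 := hpar j
  rw [mem_Iic] at hi hj
  omega

end Enumeration

theorem W_indecomposable_subtournaments_general (n : ℕ) :
    (∀ Y : Set ℕ, Y ⊆ Set.Iic (2*n) → 5 ≤ Y.ncard →
      IndecomposableOn (Warc n) Y →
      ∃ m : ℕ, 2 ≤ m ∧ m ≤ n ∧ IsoOn (Warc m) (Warc n) (Set.Iic (2*m)) Y) ∧
    (∀ m : ℕ, 2 ≤ m → m ≤ n →
      ∃ Y : Set ℕ, Y ⊆ Set.Iic (2*n) ∧ IndecomposableOn (Warc n) Y ∧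
        IsoOn (Warc m) (Warc n) (Set.Iic (2*m)) Y) := by
  refine ⟨fun Y hYn hY5 hY => ?_, fun m _ hmn => ?_⟩
  · obtain ⟨k, hk⟩ : ∃ k, Y.ncard = k + 1 := ⟨Y.ncard - 1, by omega⟩
    obtain ⟨f, hf, rfl⟩ := exists_strictMonoOn_image_Iic ((finite_Iic _).subset hYn) hk
    have hfk :=
      apex_eq_of_indecomposableOn hf (by omega) (hYn (mem_image_of_mem f (le_refl k))) hY
    obtain ⟨hpar, hkeven⟩ := mod_two_eq_of_indecomposableOn hf (by omega) hfk hY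
    obtain ⟨m, rfl⟩ : ∃ m, k = 2*m := ⟨k / 2, by omega⟩
    have := hf.Iic_id_le (2*m) le_rfl
    exact ⟨m, by omega, by omega, isoOn_image hf.injOn (warc_iff_warc_comp hf hfk hpar)⟩
  · set f : ℕ → ℕ := fun i => if i < 2*m then i else 2*n
    have hf : StrictMonoOn f (Iic (2*m)) := by
      intro i _ j hj hij
      simp only [f, mem_Iic] at hj ⊢
      split_ifs <;> omega
    have hfm : f (2*m) = 2*n := by simp [f]
    have harc := warc_iff_warc_comp hf hfm fun i hi => by simp [f, hi]
    refine ⟨f '' Iic (2*m), ?_, (indecomposableOn_warc m).image harc,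
      isoOn_image hf.injOn harc⟩
    rintro _ ⟨i, -, rfl⟩
    simp only [f, mem_Iic]
    split_ifs <;> omega

/-- For `n ≥ 2`, the indecomposable subtournaments of `W_{2n+1}` on at least 5 vertices are,
up to isomorphism, exactly the `W_{2m+1}` for `2 ≤ m ≤ n`. -/
theorem W_indecomposable_subtournaments (n : ℕ) (hn : 2 ≤ n) :
    (∀ Y : Set ℕ, Y ⊆ Set.Iic (2*n) → 5 ≤ Y.ncard →
      IndecomposableOn (Warc n) Y →
      ∃ m : ℕ, 2 ≤ m ∧ m ≤ n ∧ IsoOn (Warc m) (Warc n) (Set.Iic (2*m)) Y) ∧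
    (∀ m : ℕ, 2 ≤ m → m ≤ n →
      ∃ Y : Set ℕ, Y ⊆ Set.Iic (2*n) ∧ IndecomposableOn (Warc n) Y ∧
        IsoOn (Warc m) (Warc n) (Set.Iic (2*m)) Y) :=
  W_indecomposable_subtournaments_general n
end
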